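/- arXiv:1810.02750 — 8 statements merged into one kernel-verified Lean document; each statement's English description precedes it below -/
import Mathlib

section
/- For any frozen percolation type flow π with initial kernel a kernel κ and initial value π(0) having strictly positive entries, the limit lim_{t→∞} π(t)/‖π(t)‖₁ exists in ℝ^k, and every component of this limit is strictly positive. -/
/-!
For `t > t_c` the left eigenvector `μ` of `κ(t) ∘ π(t)` reads `μ_j = π_j (t + c_j)` with
`c_j = ∑ i, μ_i κ_ij ∈ [0, K]`, `K` a bound on the entries of `κ`, and `∑ μ = 1`. So the mass
`S = ∑ π` satisfies `S' = -φ` and `t S ≤ 1`, whence `S → 0`, and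
`(π_j / S)' = φ π_j (1 - (t + c_j) S) / S² ≥ (K S)' (π_j / S)`.
Therefore `π_j / S · e^{-K S}` is nondecreasing and bounded by `1`, so it has a positive limit,
while `e^{K S} → 1`.
-/

open Matrix

noncomputable def perronRoot {k : ℕ} (A : Matrix (Fin k) (Fin k) ℝ) : ℝ :=
  sSup ((fun z : ℂ => ‖z‖) '' spectrum ℂ (A.map Complex.ofReal))

def circ {k : ℕ} (A : Matrix (Fin k) (Fin k) ℝ) (v : Fin k → ℝ) : Matrix (Fin k) (Fin k) ℝ :=
  Matrix.of fun i j => A i j * v j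

noncomputable def l1norm {k : ℕ} (v : Fin k → ℝ) : ℝ := ∑ i, |v i|

noncomputable def kernelAt {k : ℕ} (κ : Matrix (Fin k) (Fin k) ℝ) (t : ℝ) :
    Matrix (Fin k) (Fin k) ℝ :=
  κ + t • Matrix.of (fun _ _ => (1 : ℝ))

def IsKernel {k : ℕ} (κ : Matrix (Fin k) (Fin k) ℝ) : Prop :=
  κ.IsSymm ∧ ∀ i j, 0 ≤ κ i j

structure IsTypeFlow {k : ℕ} (κ : Matrix (Fin k) (Fin k) ℝ) (π : ℝ → Fin k → ℝ)
    (tc : ℝ) (φ : ℝ → ℝ) : Prop where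
  nonneg : ∀ t ≥ (0 : ℝ), ∀ i, 0 ≤ π t i
  ne_zero : ∀ t ≥ (0 : ℝ), π t ≠ 0
  cont : ContinuousOn π (Set.Ici 0)
  tc_nonneg : 0 ≤ tc
  phi_pos : ∀ t > tc, 0 < φ t
  phi_cont : ContinuousOn φ (Set.Ioi tc)
  init : ∀ t, 0 ≤ t → t ≤ tc → π t = π 0
  crit : ∀ t ≥ tc, perronRoot (circ (kernelAt κ t) (π t)) = 1
  flowDE : ∀ t > tc, ∃ μ : Fin k → ℝ,
      (∀ i, 0 < μ i) ∧ l1norm μ = 1 ∧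
      Matrix.vecMul μ (circ (kernelAt κ t) (π t)) = μ ∧
      HasDerivAt π (-(φ t) • μ) t

open Filter Topology Set

theorem MonotoneOn.exists_tendsto_atTop_of_le {α β : Type*} [LinearOrder α]
    [ConditionallyCompleteLinearOrder β] [TopologicalSpace β] [SupConvergenceClass β]
    {f : α → β} {a : α} {B : β} (hf : MonotoneOn f (Ici a)) (hB : ∀ t ≥ a, f t ≤ B) :
    ∃ L, Tendsto f atTop (𝓝 L) ∧ ∀ t ≥ a, f t ≤ L := by
  set g : α → β := fun t => f (max t a)
  have hg : Monotone g := fun s t hst =>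
    hf (le_max_right s a) (le_max_right t a) (max_le_max hst le_rfl)
  have hgB : BddAbove (range g) := ⟨B, by rintro _ ⟨t, rfl⟩; exact hB _ (le_max_right t a)⟩
  refine ⟨⨆ t, g t, (tendsto_atTop_ciSup hg hgB).congr' ?_, fun t ht => ?_⟩
  · filter_upwards [eventually_ge_atTop a] with t ht
    simp only [g, max_eq_left ht]
  · simpa only [g, max_eq_left ht] using le_ciSup hgB t

theorem monotoneOn_mul_exp_neg_of_deriv_mul_le {s : Set ℝ} (hs : Convex ℝ s) {f g : ℝ → ℝ}
    (hf : ∀ t ∈ s, DifferentiableAt ℝ f t) (hg : ∀ t ∈ s, DifferentiableAt ℝ g t)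
    (hfg : ∀ t ∈ s, deriv g t * f t ≤ deriv f t) :
    MonotoneOn (fun t => f t * Real.exp (-g t)) s := by
  have hd : ∀ t ∈ s, HasDerivAt (fun t => f t * Real.exp (-g t))
      (deriv f t * Real.exp (-g t) + f t * (Real.exp (-g t) * -deriv g t)) t :=
    fun t ht => (hf t ht).hasDerivAt.mul (hg t ht).hasDerivAt.neg.exp
  refine monotoneOn_of_hasDerivWithinAt_nonneg hs
    (fun t ht => (hd t ht).continuousAt.continuousWithinAt)
    (fun t ht => (hd t (interior_subset ht)).hasDerivWithinAt) fun t ht => ?_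
  have hfg := hfg t (interior_subset ht)
  have hexp := Real.exp_pos (-g t)
  nlinarith

theorem l1norm_eq_sum {k : ℕ} {v : Fin k → ℝ} (hv : ∀ i, 0 ≤ v i) : l1norm v = ∑ i, v i :=
  Finset.sum_congr rfl fun i _ => abs_of_nonneg (hv i)

theorem vecMul_circ_kernelAt_apply {k : ℕ} (κ : Matrix (Fin k) (Fin k) ℝ) (t : ℝ)
    (μ v : Fin k → ℝ) (j : Fin k) :
    vecMul μ (circ (kernelAt κ t) v) j = v j * (t * ∑ i, μ i + ∑ i, μ i * κ i j) := by
  simp only [vecMul, dotProduct, circ, kernelAt, Matrix.add_apply, Matrix.smul_apply, of_apply,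
    smul_eq_mul, mul_one, Finset.mul_sum, ← Finset.sum_add_distrib]
  exact Finset.sum_congr rfl fun i _ => by ring

namespace IsTypeFlow

variable {k : ℕ} {κ : Matrix (Fin k) (Fin k) ℝ} {π : ℝ → Fin k → ℝ} {tc : ℝ} {φ : ℝ → ℝ}

theorem exists_eigenvector (hπ : IsTypeFlow κ π tc φ) {t : ℝ} (ht : tc < t) :
    ∃ μ : Fin k → ℝ, (∀ i, 0 < μ i) ∧ ∑ i, μ i = 1 ∧
      (∀ j, μ j = π t j * (t + ∑ i, μ i * κ i j)) ∧ HasDerivAt π (-(φ t) • μ) t := by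
  obtain ⟨μ, hμpos, hμnorm, hμeig, hderiv⟩ := hπ.flowDE t ht
  have hμsum : ∑ i, μ i = 1 := by rwa [← l1norm_eq_sum fun i => (hμpos i).le]
  refine ⟨μ, hμpos, hμsum, fun j => ?_, hderiv⟩
  rw [← congrFun hμeig j, vecMul_circ_kernelAt_apply, hμsum, mul_one]

theorem pos (hπ : IsTypeFlow κ π tc φ) {t : ℝ} (ht : tc < t) (j : Fin k) : 0 < π t j := by
  obtain ⟨μ, hμpos, -, hμ, -⟩ := hπ.exists_eigenvector ht
  refine (hπ.nonneg t (hπ.tc_nonneg.trans ht.le) j).lt_of_ne' fun h => (hμpos j).ne' ?_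
  rw [hμ j, h, zero_mul]

theorem sum_pos (hπ : IsTypeFlow κ π tc φ) {t : ℝ} (ht : tc < t) : 0 < ∑ i, π t i := by
  obtain ⟨μ, -, hμsum, -, -⟩ := hπ.exists_eigenvector ht
  have hne : ∑ i, μ i ≠ 0 := by rw [hμsum]; exact one_ne_zero
  exact Finset.sum_pos (fun i _ => hπ.pos ht i) (Finset.nonempty_of_sum_ne_zero hne)

theorem mul_sum_le_one (hπ : IsTypeFlow κ π tc φ) (hκ : ∀ i j, 0 ≤ κ i j) {t : ℝ}
    (ht : tc < t) : t * ∑ i, π t i ≤ 1 := by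
  obtain ⟨μ, hμpos, hμsum, hμ, -⟩ := hπ.exists_eigenvector ht
  calc t * ∑ i, π t i = ∑ i, π t i * t := by rw [Finset.mul_sum]; simp only [mul_comm]
    _ ≤ ∑ i, π t i * (t + ∑ l, μ l * κ l i) := by
      refine Finset.sum_le_sum fun i _ => mul_le_mul_of_nonneg_left ?_ (hπ.pos ht i).le
      exact le_add_of_nonneg_right (Finset.sum_nonneg fun l _ => mul_nonneg (hμpos l).le (hκ l i))
    _ = 1 := by rw [← hμsum]; exact Finset.sum_congr rfl fun i _ => (hμ i).symm

theorem tendsto_sum_atTop (hπ : IsTypeFlow κ π tc φ) (hκ : ∀ i j, 0 ≤ κ i j) :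
    Tendsto (fun t => ∑ i, π t i) atTop (𝓝 0) := by
  refine squeeze_zero' ?_ ?_ tendsto_inv_atTop_zero
  · filter_upwards [eventually_gt_atTop tc] with t ht
    exact (hπ.sum_pos ht).le
  · filter_upwards [eventually_gt_atTop tc] with t ht
    have htpos : 0 < t := hπ.tc_nonneg.trans_lt ht
    rw [← one_div, le_div_iff₀ htpos, mul_comm]
    exact hπ.mul_sum_le_one hκ ht

theorem hasDerivAt_sum (hπ : IsTypeFlow κ π tc φ) {t : ℝ} (ht : tc < t) :
    HasDerivAt (fun u => ∑ i, π u i) (-φ t) t := by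
  obtain ⟨μ, -, hμsum, -, hderiv⟩ := hπ.exists_eigenvector ht
  have hsum := HasDerivAt.fun_sum fun i (_ : i ∈ Finset.univ) => hasDerivAt_pi.1 hderiv i
  simpa only [Pi.smul_apply, smul_eq_mul, ← Finset.mul_sum, hμsum, mul_one] using hsum

theorem exists_hasDerivAt_div_sum (hπ : IsTypeFlow κ π tc φ) {K : ℝ} (hK : ∀ i j, κ i j ≤ K)
    {t : ℝ} (ht : tc < t) (j : Fin k) : ∃ c ≤ K, HasDerivAt (fun u => π u j / ∑ i, π u i)
      (φ t * π t j * (1 - (t + c) * ∑ i, π t i) / (∑ i, π t i) ^ 2) t := by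
  obtain ⟨μ, hμpos, hμsum, hμ, hderiv⟩ := hπ.exists_eigenvector ht
  refine ⟨∑ i, μ i * κ i j, ?_, ?_⟩
  · calc ∑ i, μ i * κ i j ≤ ∑ i, μ i * K :=
          Finset.sum_le_sum fun i _ => mul_le_mul_of_nonneg_left (hK i j) (hμpos i).le
      _ = K := by rw [← Finset.sum_mul, hμsum, one_mul]
  · have hj : HasDerivAt (fun u => π u j) (-φ t * μ j) t := by
      simpa only [Pi.smul_apply, smul_eq_mul] using hasDerivAt_pi.1 hderiv j
    refine (hj.div (hπ.hasDerivAt_sum ht) (hπ.sum_pos ht).ne').congr_deriv ?_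
    rw [hμ j]
    ring

theorem monotoneOn_div_sum_mul_exp (hπ : IsTypeFlow κ π tc φ) (hκ : ∀ i j, 0 ≤ κ i j) {K : ℝ}
    (hK : ∀ i j, κ i j ≤ K) (j : Fin k) :
    MonotoneOn (fun t => π t j / (∑ i, π t i) * Real.exp (-(K * ∑ i, π t i))) (Ioi tc) := by
  have hS (t) (ht : t ∈ Ioi tc) := (hπ.hasDerivAt_sum ht).const_mul K
  refine monotoneOn_mul_exp_neg_of_deriv_mul_le (convex_Ioi tc)
    (fun t ht => (hπ.exists_hasDerivAt_div_sum hK ht j).choose_spec.2.differentiableAt)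
    (fun t ht => (hS t ht).differentiableAt) fun t ht => ?_
  obtain ⟨c, hcK, hd⟩ := hπ.exists_hasDerivAt_div_sum hK ht j
  rw [hd.deriv, (hS t ht).deriv]
  have hSpos := hπ.sum_pos ht
  have hslack : 0 ≤ φ t * π t j * ((1 - t * ∑ i, π t i) + (K - c) * ∑ i, π t i) :=
    mul_nonneg (mul_nonneg (hπ.phi_pos t ht).le (hπ.pos ht j).le) <|
      add_nonneg (sub_nonneg.2 (hπ.mul_sum_le_one hκ ht)) (mul_nonneg (sub_nonneg.2 hcK) hSpos.le)
  rw [le_div_iff₀ (by positivity)]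
  field_simp
  linear_combination hslack

theorem exists_tendsto_div_sum_mul_exp (hπ : IsTypeFlow κ π tc φ) (hκ : ∀ i j, 0 ≤ κ i j)
    {K : ℝ} (hK₀ : 0 ≤ K) (hK : ∀ i j, κ i j ≤ K) (j : Fin k) : ∃ L > 0,
      Tendsto (fun t => π t j / (∑ i, π t i) * Real.exp (-(K * ∑ i, π t i))) atTop (𝓝 L) := by
  have hmono := (hπ.monotoneOn_div_sum_mul_exp hκ hK j).mono (Ici_subset_Ioi.2 (lt_add_one tc))
  obtain ⟨L, hL, hle⟩ := hmono.exists_tendsto_atTop_of_le (B := 1) fun t ht₁ => by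
    have ht : tc < t := (lt_add_one tc).trans_le ht₁
    have hSpos := hπ.sum_pos ht
    refine mul_le_one₀ ?_ (Real.exp_pos _).le (Real.exp_le_one_iff.2 ?_)
    · exact div_le_one_of_le₀ (Finset.single_le_sum (fun i _ => (hπ.pos ht i).le)
        (Finset.mem_univ j)) hSpos.le
    · exact neg_nonpos.2 (mul_nonneg hK₀ hSpos.le)
  have ht : tc < tc + 1 := lt_add_one tc
  have hpos : 0 < π (tc + 1) j / (∑ i, π (tc + 1) i) * Real.exp (-(K * ∑ i, π (tc + 1) i)) :=
    mul_pos (div_pos (hπ.pos ht j) (hπ.sum_pos ht)) (Real.exp_pos _)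
  exact ⟨L, hpos.trans_le (hle _ le_rfl), hL⟩

end IsTypeFlow

theorem frozen_percolation_type_flow_time_limit_general
    {k : ℕ} (κ : Matrix (Fin k) (Fin k) ℝ) (hκ : IsKernel κ)
    (π : ℝ → Fin k → ℝ) (tc : ℝ) (φ : ℝ → ℝ) (hπ : IsTypeFlow κ π tc φ) :
    ∃ L : Fin k → ℝ,
      Filter.Tendsto (fun t => (l1norm (π t))⁻¹ • π t) Filter.atTop (nhds L) ∧
      ∀ i, 0 < L i := by
  obtain ⟨K, hK₀, hK⟩ : ∃ K, 0 ≤ K ∧ ∀ i j, κ i j ≤ K := by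
    obtain ⟨K, hK⟩ := (Set.finite_range (Function.uncurry κ)).bddAbove
    exact ⟨max K 0, le_max_right _ _, fun i j => (hK ⟨(i, j), rfl⟩).trans (le_max_left _ _)⟩
  choose L hLpos hL using hπ.exists_tendsto_div_sum_mul_exp hκ.2 hK₀ hK
  have hexp : Tendsto (fun t => Real.exp (K * ∑ i, π t i)) atTop (𝓝 1) := by
    simpa using ((hπ.tendsto_sum_atTop hκ.2).const_mul K).rexp
  refine ⟨L, tendsto_pi_nhds.2 fun j => ?_, hLpos⟩
  refine (by simpa using (hL j).mul hexp : Tendsto _ atTop (𝓝 (L j))).congr' ?_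
  filter_upwards [eventually_gt_atTop tc] with t ht
  rw [l1norm_eq_sum fun i => (hπ.pos ht i).le, mul_assoc, ← Real.exp_add, neg_add_cancel,
    Real.exp_zero, mul_one, Pi.smul_apply, smul_eq_mul, div_eq_inv_mul]

/-- Theorem 2 (flowtimelimitthm): the normalised type distribution of a frozen percolation
type flow converges as t → ∞ to a strictly positive limit. -/
theorem frozen_percolation_type_flow_time_limit
    {k : ℕ} (hk : 0 < k) (κ : Matrix (Fin k) (Fin k) ℝ) (hκ : IsKernel κ)
    (π : ℝ → Fin k → ℝ) (tc : ℝ) (φ : ℝ → ℝ) (hπ : IsTypeFlow κ π tc φ)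
    (hπ0pos : ∀ i, 0 < π 0 i) :
    ∃ L : Fin k → ℝ,
      Filter.Tendsto (fun t => (l1norm (π t))⁻¹ • π t) Filter.atTop (nhds L) ∧
      ∀ i, 0 < L i :=
  frozen_percolation_type_flow_time_limit_general κ hκ π tc φ hπ
end

section
/- Let 𝔸 be a compact subset of the set of k×k real matrices with nonnegative entries such that for every A ∈ 𝔸 the spectral radius ρ(A) is an eigenvalue of A which is a simple root of the characteristic polynomial of A. Then there exists a constant C < ∞ such that: for all A, A' ∈ 𝔸 and all vectors μ, μ' ∈ ℝ^k with nonnegative entries and ‖μ‖₁ = ‖μ'‖₁ = 1 satisfying μA = ρ(A)μ and μ'A' = ρ(A')μ', one has ‖μ − μ'‖₁ ≤ C · max_{i,j∈[k]} |A_{i,j} − A'_{i,j}|. -/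
open Matrix

/-- `B ∈ B_θ(A)`: `B` has strictly positive entries and each entry differs from
the corresponding entry of `A` by at most `θ`. -/
def memBall {k : ℕ} (θ : ℝ) (A B : Matrix (Fin k) (Fin k) ℝ) : Prop :=
  (∀ i j, 0 < B i j) ∧ ∀ i j, |B i j - A i j| ≤ θ

/-!
Near a matrix `A` whose Perron root `ρ(A)` is a simple root of its characteristic polynomial, the
implicit function theorem gives a `C¹` root `ψ` of the characteristic polynomial with
`ψ A = ρ(A)`. Every real root is at most the Perron root and the Perron root is upper
semicontinuous (the spectrum is upper hemicontinuous), so `ρ = ψ` on `𝔸` near `A`.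
Replacing a suitable column of `ψ B • 1 - B` by the all-ones vector gives a matrix `T B`, invertible
at `A` because the left eigenspace is a line, and the normalised left eigenvector of `B` is a row of
`(T B)⁻¹`; hence it depends `C¹`, in particular locally Lipschitz, on `B`. The matrices of `𝔸`
that admit a normalised nonnegative left eigenvector for the Perron root form a compact set, and a
locally Lipschitz map on a compact set is Lipschitz.
-/

open Polynomial Filter Topology

namespace Matrix

variable {ι K : Type*} [Fintype ι] [Field K]

theorem vecMul_eq_zero_of_forall_ne {M : Matrix ι ι K} {u : ι → K} (hu : M *ᵥ u = 0) {j₀ : ι}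
    (hj₀ : u j₀ ≠ 0) {v : ι → K} (hv : ∀ j ≠ j₀, (v ᵥ* M) j = 0) : v ᵥ* M = 0 := by
  have hdot : (v ᵥ* M) ⬝ᵥ u = (v ᵥ* M) j₀ * u j₀ :=
    Finset.sum_eq_single j₀ (fun j _ hj => by rw [hv j hj, zero_mul]) (by simp)
  rw [← dotProduct_mulVec, hu, dotProduct_zero, eq_comm, mul_eq_zero] at hdot
  ext j
  rcases eq_or_ne j j₀ with rfl | hj
  · exact hdot.resolve_right hj₀
  · exact hv j hj

variable [DecidableEq ι]

theorem eq_zero_of_vecMul_eq_smul_of_sum_eq_zero {A : Matrix ι ι K} {r : K}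
    (hr : A.charpoly.rootMultiplicity r ≤ 1) {μ v : ι → K} (hμ : μ ᵥ* A = r • μ)
    (hμ1 : ∑ i, μ i ≠ 0) (hv : v ᵥ* A = r • v) (hv0 : ∑ i, v i = 0) : v = 0 := by
  set φ : Module.End K (ι → K) := Aᵀ.toLin'
  have hmem : ∀ x : ι → K, x ᵥ* A = r • x → x ∈ φ.eigenspace r := fun x hx => by
    rwa [Module.End.mem_eigenspace_iff, toLin'_apply, mulVec_transpose]
  have hdim : Module.finrank K (φ.eigenspace r) ≤ 1 := by
    have hφ : φ.charpoly = A.charpoly := by rw [charpoly_toLin', charpoly_transpose]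
    exact (LinearMap.finrank_eigenspace_le φ r).trans (hφ ▸ hr)
  obtain ⟨w, hw⟩ := finrank_le_one_iff.1 hdim
  obtain ⟨a, ha⟩ := hw ⟨μ, hmem μ hμ⟩
  obtain ⟨b, hb⟩ := hw ⟨v, hmem v hv⟩
  replace ha : a • (w : ι → K) = μ := congrArg Subtype.val ha
  replace hb : b • (w : ι → K) = v := congrArg Subtype.val hb
  have hb0 : b = 0 := by
    have hsum : ∀ (c : K) (x : ι → K), ∑ i, (c • x) i = c * ∑ i, x i := fun c x => by
      simp [Finset.mul_sum]
    rw [← hb, hsum] at hv0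
    rw [← ha, hsum] at hμ1
    exact (mul_eq_zero.1 hv0).resolve_right (right_ne_zero_of_mul hμ1)
  rw [← hb, hb0, zero_smul]

theorem det_updateCol_ne_zero {M : Matrix ι ι K} {u : ι → K} (hu : M *ᵥ u = 0) {j₀ : ι}
    (hj₀ : u j₀ ≠ 0) {c : ι → K} (hker : ∀ v, v ᵥ* M = 0 → v ⬝ᵥ c = 0 → v = 0) :
    (M.updateCol j₀ c).det ≠ 0 := by
  rw [Ne, ← exists_vecMul_eq_zero_iff]
  rintro ⟨v, hv0, hv⟩
  rw [vecMul_updateCol] at hv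
  refine hv0 (hker v (vecMul_eq_zero_of_forall_ne hu hj₀ fun j hj => ?_) ?_)
  · simpa [hj] using congrFun hv j
  · simpa using congrFun hv j₀

end Matrix

section Calculus

open scoped Matrix.Norms.Elementwise

variable {ι : Type*} [Fintype ι] [DecidableEq ι] {n : WithTop ℕ∞}

namespace Matrix

theorem contDiff_det : ContDiff ℝ n (fun B : Matrix ι ι ℝ => B.det) := by
  simp only [det_apply]
  fun_prop

theorem contDiff_updateCol (j : ι) (c : ι → ℝ) :
    ContDiff ℝ n (fun B : Matrix ι ι ℝ => B.updateCol j c) := by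
  refine contDiff_pi.2 fun i => contDiff_pi.2 fun j' => ?_
  simp only [updateCol_apply]
  split_ifs <;> fun_prop

theorem contDiff_updateRow (i : ι) (c : ι → ℝ) :
    ContDiff ℝ n (fun B : Matrix ι ι ℝ => B.updateRow i c) := by
  refine contDiff_pi.2 fun i' => contDiff_pi.2 fun j => ?_
  simp only [updateRow_apply]
  split_ifs <;> fun_prop

theorem contDiff_adjugate : ContDiff ℝ n (fun B : Matrix ι ι ℝ => B.adjugate) := by
  refine contDiff_pi.2 fun i => contDiff_pi.2 fun j => ?_
  simp only [adjugate_apply]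
  exact contDiff_det.comp (contDiff_updateRow j _)

theorem contDiffAt_inv {A : Matrix ι ι ℝ} (hA : A.det ≠ 0) :
    ContDiffAt ℝ n (fun B : Matrix ι ι ℝ => B⁻¹) A := by
  simp only [inv_def, Ring.inverse_eq_inv']
  exact (contDiff_det.contDiffAt.inv hA).smul contDiff_adjugate.contDiffAt

theorem contDiff_eval_charpoly :
    ContDiff ℝ n (fun p : Matrix ι ι ℝ × ℝ => p.1.charpoly.eval p.2) := by
  simp only [eval_charpoly, scalar_apply, ← smul_one_eq_diagonal]
  exact contDiff_det.comp (by fun_prop)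

end Matrix

theorem ContinuousLinearMap.isInvertible_of_apply_one_ne_zero {L : ℝ →L[ℝ] ℝ} (h : L 1 ≠ 0) :
    L.IsInvertible :=
  ⟨ContinuousLinearEquiv.unitsEquivAut ℝ (Units.mk0 _ h), by ext; simp⟩

theorem exists_contDiffAt_isRoot_charpoly_iff (A : Matrix ι ι ℝ) {r : ℝ}
    (hr : A.charpoly.rootMultiplicity r = 1) :
    ∃ ψ : Matrix ι ι ℝ → ℝ, ψ A = r ∧ ContDiffAt ℝ 1 ψ A ∧
      ∀ᶠ p in 𝓝 (A, r), p.1.charpoly.IsRoot p.2 ↔ ψ p.1 = p.2 := by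
  have hne := A.charpoly_monic.ne_zero
  have hroot : A.charpoly.IsRoot r := (rootMultiplicity_pos hne).1 (by omega)
  set F : Matrix ι ι ℝ × ℝ → ℝ := fun p => p.1.charpoly.eval p.2
  have hF : ContDiffAt ℝ 1 F (A, r) := Matrix.contDiff_eval_charpoly.contDiffAt
  -- `∂F/∂t (A, r)` is the derivative of the characteristic polynomial, nonzero at a simple root
  have hF₂ : (fderiv ℝ F (A, r) ∘L .inr ℝ _ ℝ).IsInvertible := by
    refine ContinuousLinearMap.isInvertible_of_apply_one_ne_zero fun h => ?_
    have hderiv : HasDerivAt (fun t => F (A, t)) ((fderiv ℝ F (A, r) ∘L .inr ℝ _ ℝ) 1) r :=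
      ((hF.differentiableAt one_ne_zero).hasFDerivAt.comp r
        (hasFDerivAt_prodMk_right A r)).hasDerivAt
    rw [hderiv.unique (A.charpoly.hasDerivAt r)] at h
    have := (one_lt_rootMultiplicity_iff_isRoot hne).2 ⟨hroot, h⟩
    omega
  refine ⟨hF.implicitFunction one_ne_zero hF₂, hF.implicitFunction_apply_self one_ne_zero hF₂,
    hF.contDiffAt_implicitFunction one_ne_zero hF₂, ?_⟩
  filter_upwards [hF.eventually_apply_eq_iff_implicitFunction one_ne_zero hF₂] with p hp
  rw [IsRoot, ← hp]
  simp [F, hroot.eq_zero]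

theorem exists_contDiffAt_eq_of_vecMul_eq_smul {A : Matrix ι ι ℝ} {ψ : Matrix ι ι ℝ → ℝ}
    (hψ : ContDiffAt ℝ 1 ψ A) (hr : A.charpoly.rootMultiplicity (ψ A) ≤ 1) {μ₀ : ι → ℝ}
    (hμ₀ : μ₀ ᵥ* A = ψ A • μ₀) (hμ₀1 : ∑ i, μ₀ i ≠ 0) :
    ∃ w : Matrix ι ι ℝ → ι → ℝ, ContDiffAt ℝ 1 w A ∧
      ∀ᶠ B in 𝓝 A, ∀ μ : ι → ℝ, μ ᵥ* B = ψ B • μ → ∑ i, μ i = 1 → μ = w B := by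
  have hvecMul : ∀ (B : Matrix ι ι ℝ) (μ : ι → ℝ), μ ᵥ* (ψ B • 1 - B) = 0 ↔ μ ᵥ* B = ψ B • μ :=
    fun B μ => by rw [vecMul_sub, vecMul_smul, vecMul_one, sub_eq_zero, eq_comm]
  have hsing : (ψ A • 1 - A).det = 0 := by
    rw [← exists_vecMul_eq_zero_iff]
    exact ⟨μ₀, fun h => hμ₀1 (by simp [h]), (hvecMul A μ₀).2 hμ₀⟩
  obtain ⟨u, hu0, hu⟩ := exists_mulVec_eq_zero_iff.2 hsing
  obtain ⟨j₀, hj₀⟩ := Function.ne_iff.1 hu0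
  -- `μ ᵥ* T B = Pi.single j₀ 1` says `μ ᵥ* (ψ B • 1 - B) = 0` and `∑ i, μ i = 1`: column `j₀` of
  -- `ψ A • 1 - A` is a combination of the others (as `u j₀ ≠ 0`), so it can be traded for the sum.
  set T : Matrix ι ι ℝ → Matrix ι ι ℝ := fun B => (ψ B • 1 - B).updateCol j₀ 1
  have hTA : (T A).det ≠ 0 := by
    refine Matrix.det_updateCol_ne_zero hu hj₀ fun v hv hv1 => ?_
    rw [dotProduct_one] at hv1
    exact Matrix.eq_zero_of_vecMul_eq_smul_of_sum_eq_zero hr hμ₀ hμ₀1 ((hvecMul A v).1 hv) hv1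
  have hT : ContDiffAt ℝ 1 T A :=
    (Matrix.contDiff_updateCol j₀ 1).contDiffAt.comp A
      ((hψ.smul contDiffAt_const).sub contDiffAt_id)
  refine ⟨fun B => (T B)⁻¹ j₀, contDiffAt_pi.1 ((Matrix.contDiffAt_inv hTA).comp A hT) j₀, ?_⟩
  filter_upwards [(Matrix.contDiff_det.contDiffAt.comp A hT).continuousAt.eventually_ne hTA]
    with B hB μ hμ hμ1
  have hμT : μ ᵥ* T B = Pi.single j₀ 1 := by
    rw [vecMul_updateCol, (hvecMul B μ).2 hμ, dotProduct_one, hμ1]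
    rfl
  calc μ = μ ᵥ* (T B * (T B)⁻¹) := by rw [mul_nonsing_inv _ (isUnit_iff_ne_zero.2 hB), vecMul_one]
    _ = (T B)⁻¹ j₀ := by rw [← vecMul_vecMul, hμT, single_one_vecMul]; rfl

end Calculus

section PerronRoot

variable {k : ℕ}

theorem perronRoot_nonneg (A : Matrix (Fin k) (Fin k) ℝ) : 0 ≤ perronRoot A :=
  Real.sSup_nonneg (by rintro _ ⟨z, -, rfl⟩; exact norm_nonneg z)

theorem norm_le_perronRoot {A : Matrix (Fin k) (Fin k) ℝ} {z : ℂ}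
    (hz : z ∈ spectrum ℂ (A.map Complex.ofReal)) : ‖z‖ ≤ perronRoot A := by
  -- any Banach-algebra norm on complex matrices makes the spectrum compact
  let := Matrix.linftyOpNormedRing (n := Fin k) (α := ℂ)
  let := Matrix.linftyOpNormedAlgebra (n := Fin k) (R := ℂ) (α := ℂ)
  exact le_csSup ((spectrum.isCompact _).image continuous_norm).bddAbove ⟨z, hz, rfl⟩

theorem le_perronRoot_of_isRoot {A : Matrix (Fin k) (Fin k) ℝ} {t : ℝ} (h : A.charpoly.IsRoot t) :
    t ≤ perronRoot A := by
  have ht : (t : ℂ) ∈ spectrum ℂ (A.map Complex.ofRealHom) := by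
    refine Matrix.mem_spectrum_of_isRoot_charpoly ?_
    rw [Matrix.charpoly_map]
    exact h.map
  calc t ≤ ‖(t : ℂ)‖ := by rw [Complex.norm_real, Real.norm_eq_abs]; exact le_abs_self t
    _ ≤ perronRoot A := norm_le_perronRoot ht

theorem eventually_perronRoot_lt (A : Matrix (Fin k) (Fin k) ℝ) {ε : ℝ} (hε : 0 < ε) :
    ∀ᶠ B in 𝓝 A, perronRoot B < perronRoot A + ε := by
  let := Matrix.linftyOpNormedRing (n := Fin k) (α := ℂ)
  let := Matrix.linftyOpNormedAlgebra (n := Fin k) (R := ℂ) (α := ℂ)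
  have hsub : spectrum ℂ (A.map Complex.ofReal) ⊆ {z : ℂ | ‖z‖ < perronRoot A + ε / 2} :=
    fun z hz => (norm_le_perronRoot hz).trans_lt (by linarith)
  have hcont : Continuous fun B : Matrix (Fin k) (Fin k) ℝ => B.map Complex.ofReal :=
    Continuous.matrix_map continuous_id Complex.continuous_ofReal
  have hspec := (upperHemicontinuous_spectrum ℂ _).forall_isOpen _ _
    (isOpen_lt continuous_norm continuous_const) hsub
  filter_upwards [hcont.continuousAt.eventually hspec] with B hB
  refine (Real.sSup_le (a := perronRoot A + ε / 2) ?_ (by linarith [perronRoot_nonneg A])).trans_lt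
    (by linarith)
  rintro _ ⟨z, hz, rfl⟩
  exact (hB hz).le

end PerronRoot

section PerronVector

open scoped Matrix.Norms.Elementwise

variable {k : ℕ}

theorem exists_contDiffAt_eventuallyEq_perronRoot {𝔸 : Set (Matrix (Fin k) (Fin k) ℝ)}
    (h𝔸 : ∀ B ∈ 𝔸, B.charpoly.IsRoot (perronRoot B)) {A : Matrix (Fin k) (Fin k) ℝ}
    (hA : A.charpoly.rootMultiplicity (perronRoot A) = 1) :
    ∃ ψ : Matrix (Fin k) (Fin k) ℝ → ℝ, ψ A = perronRoot A ∧ ContDiffAt ℝ 1 ψ A ∧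
      perronRoot =ᶠ[𝓝[𝔸] A] ψ := by
  obtain ⟨ψ, hψA, hψ, hiff⟩ := exists_contDiffAt_isRoot_charpoly_iff A hA
  have hψlim : Tendsto ψ (𝓝 A) (𝓝 (perronRoot A)) := hψA ▸ hψ.continuousAt.tendsto
  have hψroot : ∀ᶠ B in 𝓝 A, B.charpoly.IsRoot (ψ B) := by
    filter_upwards [(tendsto_id.prodMk_nhds hψlim).eventually hiff] with B hB
    exact hB.2 rfl
  -- `ψ B ≤ perronRoot B`, and `perronRoot` is upper semicontinuous
  have hlim : Tendsto perronRoot (𝓝 A) (𝓝 (perronRoot A)) := by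
    refine tendsto_order.2 ⟨fun a ha => ?_, fun a ha => ?_⟩
    · filter_upwards [hψlim.eventually (lt_mem_nhds ha), hψroot] with B hB hBroot
      exact hB.trans_le (le_perronRoot_of_isRoot hBroot)
    · simpa using eventually_perronRoot_lt A (sub_pos.2 ha)
  refine ⟨ψ, hψA, hψ, ?_⟩
  filter_upwards [self_mem_nhdsWithin,
    ((tendsto_id.prodMk_nhds hlim).eventually hiff).filter_mono nhdsWithin_le_nhds] with B hB hBiff
  exact (hBiff.1 (h𝔸 B hB)).symm

theorem continuousOn_perronRoot {𝔸 : Set (Matrix (Fin k) (Fin k) ℝ)}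
    (h𝔸 : ∀ A ∈ 𝔸, A.charpoly.rootMultiplicity (perronRoot A) = 1) : ContinuousOn perronRoot 𝔸 := by
  intro A hA
  have hroot : ∀ B ∈ 𝔸, B.charpoly.IsRoot (perronRoot B) := fun B hB =>
    (rootMultiplicity_pos'.1 (h𝔸 B hB ▸ one_pos)).2
  obtain ⟨ψ, hψA, hψ, heq⟩ := exists_contDiffAt_eventuallyEq_perronRoot hroot (h𝔸 A hA)
  exact hψ.continuousAt.continuousWithinAt.congr_of_eventuallyEq heq hψA.symm

def IsPerronVector (A : Matrix (Fin k) (Fin k) ℝ) (μ : Fin k → ℝ) : Prop :=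
  μ ∈ stdSimplex ℝ (Fin k) ∧ μ ᵥ* A = perronRoot A • μ

-- An arbitrary vector when `A` has no Perron vector.
noncomputable def perronVector (A : Matrix (Fin k) (Fin k) ℝ) : Fin k → ℝ :=
  Classical.epsilon (IsPerronVector A)

theorem isPerronVector_perronVector {A : Matrix (Fin k) (Fin k) ℝ}
    (h : ∃ μ, IsPerronVector A μ) : IsPerronVector A (perronVector A) :=
  Classical.epsilon_spec h

theorem isPerronVector_of_l1norm_eq_one {A : Matrix (Fin k) (Fin k) ℝ} {μ : Fin k → ℝ}
    (hμ0 : ∀ i, 0 ≤ μ i) (hμ1 : l1norm μ = 1) (hμ : μ ᵥ* A = perronRoot A • μ) :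
    IsPerronVector A μ :=
  ⟨⟨hμ0, by rw [← hμ1]; exact Finset.sum_congr rfl fun i _ => (abs_of_nonneg (hμ0 i)).symm⟩, hμ⟩

theorem IsPerronVector.eq_perronVector {A : Matrix (Fin k) (Fin k) ℝ} {μ : Fin k → ℝ}
    (hA : A.charpoly.rootMultiplicity (perronRoot A) ≤ 1) (hμ : IsPerronVector A μ) :
    μ = perronVector A := by
  obtain ⟨⟨-, hν1⟩, hν⟩ := isPerronVector_perronVector ⟨μ, hμ⟩
  refine (sub_eq_zero.1 (Matrix.eq_zero_of_vecMul_eq_smul_of_sum_eq_zero hA hν (by simp [hν1])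
    (by rw [sub_vecMul, hμ.2, hν, smul_sub]) ?_)).symm
  simp [Finset.sum_sub_distrib, hν1, hμ.1.2]

theorem isCompact_setOf_isPerronVector {𝔸 : Set (Matrix (Fin k) (Fin k) ℝ)} (h𝔸 : IsCompact 𝔸)
    (hcont : ContinuousOn perronRoot 𝔸) : IsCompact {A ∈ 𝔸 | ∃ μ, IsPerronVector A μ} := by
  have hP : IsCompact {p ∈ 𝔸 ×ˢ stdSimplex ℝ (Fin k) | p.2 ᵥ* p.1 = perronRoot p.1 • p.2} := by
    have hK := h𝔸.prod (isCompact_stdSimplex ℝ (Fin k))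
    refine hK.of_isClosed_subset (hK.isClosed.isClosed_eq ?_ ?_) (Set.sep_subset _ _)
    · exact (Continuous.matrix_vecMul continuous_snd continuous_fst).continuousOn
    · exact (hcont.comp continuousOn_fst fun p hp => hp.1).smul continuousOn_snd
  convert hP.image continuous_fst using 1
  ext A
  simp [IsPerronVector, and_assoc]

theorem locallyLipschitzOn_perronVector {𝔸 : Set (Matrix (Fin k) (Fin k) ℝ)}
    (h𝔸 : ∀ A ∈ 𝔸, A.charpoly.rootMultiplicity (perronRoot A) = 1) :
    LocallyLipschitzOn {A ∈ 𝔸 | ∃ μ, IsPerronVector A μ} perronVector := by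
  rintro A ⟨hA, μ, hμ⟩
  have hroot : ∀ B ∈ 𝔸, B.charpoly.IsRoot (perronRoot B) := fun B hB =>
    (rootMultiplicity_pos'.1 (h𝔸 B hB ▸ one_pos)).2
  obtain ⟨ψ, hψA, hψ, hρψ⟩ := exists_contDiffAt_eventuallyEq_perronRoot hroot (h𝔸 A hA)
  obtain ⟨⟨-, hν1⟩, hν⟩ := isPerronVector_perronVector ⟨μ, hμ⟩
  obtain ⟨w, hw, hweq⟩ := exists_contDiffAt_eq_of_vecMul_eq_smul hψ (hψA ▸ (h𝔸 A hA).le)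
    (hψA ▸ hν) (by simp [hν1])
  obtain ⟨L, t, ht, hL⟩ := hw.exists_lipschitzOnWith
  have heq : ∀ᶠ B in 𝓝[{A ∈ 𝔸 | ∃ μ, IsPerronVector A μ}] A, perronVector B = w B := by
    filter_upwards [self_mem_nhdsWithin, hρψ.filter_mono (nhdsWithin_mono _ (Set.sep_subset _ _)),
      mem_nhdsWithin_of_mem_nhds hweq] with B hBK hB hwB
    obtain ⟨⟨-, hB1⟩, hBe⟩ := isPerronVector_perronVector hBK.2
    exact hwB _ (hB ▸ hBe) hB1
  refine ⟨L, t ∩ {B | perronVector B = w B}, Filter.inter_mem (mem_nhdsWithin_of_mem_nhds ht) heq,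
    fun B hB B' hB' => ?_⟩
  rw [hB.2, hB'.2]
  exact hL hB.1 hB'.1

theorem l1norm_le_mul_norm (v : Fin k → ℝ) : l1norm v ≤ k * ‖v‖ := by
  calc l1norm v ≤ ∑ _i : Fin k, ‖v‖ := Finset.sum_le_sum fun i _ => norm_le_pi_norm v i
    _ = k * ‖v‖ := by simp

theorem Matrix.dist_le_iSup_iSup_abs_sub {m n : Type*} [Fintype m] [Fintype n]
    (A A' : Matrix m n ℝ) : dist A A' ≤ ⨆ i, ⨆ j, |A i j - A' i j| := by
  have hle : ∀ i j, |A i j - A' i j| ≤ ⨆ i, ⨆ j, |A i j - A' i j| := fun i j =>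
    (le_ciSup (f := fun j => |A i j - A' i j|) (Set.finite_range _).bddAbove j).trans
      (le_ciSup (f := fun i => ⨆ j, |A i j - A' i j|) (Set.finite_range _).bddAbove i)
  rw [dist_eq_norm, Matrix.norm_le_iff (Real.iSup_nonneg fun i => Real.iSup_nonneg fun j =>
    abs_nonneg _)]
  exact hle

theorem exists_l1norm_perronVector_sub_le {𝔸 : Set (Matrix (Fin k) (Fin k) ℝ)}
    (hcomp : IsCompact 𝔸) (h𝔸 : ∀ A ∈ 𝔸, A.charpoly.rootMultiplicity (perronRoot A) = 1) :
    ∃ C : ℝ, ∀ A ∈ {A ∈ 𝔸 | ∃ μ, IsPerronVector A μ}, ∀ A' ∈ {A ∈ 𝔸 | ∃ μ, IsPerronVector A μ},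
      l1norm (perronVector A - perronVector A') ≤ C * ⨆ i, ⨆ j, |A i j - A' i j| := by
  obtain ⟨L, hL⟩ := (locallyLipschitzOn_perronVector h𝔸).exists_lipschitzOnWith_of_compact
    (isCompact_setOf_isPerronVector hcomp (continuousOn_perronRoot h𝔸))
  refine ⟨k * L, fun A hA A' hA' => ?_⟩
  calc l1norm (perronVector A - perronVector A')
      ≤ k * dist (perronVector A) (perronVector A') := by
        rw [dist_eq_norm]; exact l1norm_le_mul_norm _
    _ ≤ k * (L * dist A A') := by gcongr; exact hL.dist_le_mul A hA A' hA'
    _ ≤ k * L * ⨆ i, ⨆ j, |A i j - A' i j| := by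
        rw [← mul_assoc]; gcongr; exact Matrix.dist_le_iSup_iSup_abs_sub A A'

end PerronVector

theorem principal_eigenvector_lipschitz_compact_general
    {k : ℕ} (𝔸 : Set (Matrix (Fin k) (Fin k) ℝ)) (hcomp : IsCompact 𝔸)
    (h𝔸 : ∀ A ∈ 𝔸, (∀ i j, 0 ≤ A i j) ∧
      (Matrix.charpoly A).rootMultiplicity (perronRoot A) = 1) :
    ∃ C : ℝ, ∀ A ∈ 𝔸, ∀ A' ∈ 𝔸, ∀ μ μ' : Fin k → ℝ,
      (∀ i, 0 ≤ μ i) → l1norm μ = 1 → Matrix.vecMul μ A = perronRoot A • μ →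
      (∀ i, 0 ≤ μ' i) → l1norm μ' = 1 → Matrix.vecMul μ' A' = perronRoot A' • μ' →
      l1norm (μ - μ') ≤ C * ⨆ i, ⨆ j, |A i j - A' i j| := by
  have hmult : ∀ A ∈ 𝔸, A.charpoly.rootMultiplicity (perronRoot A) = 1 := fun A hA => (h𝔸 A hA).2
  obtain ⟨C, hC⟩ := exists_l1norm_perronVector_sub_le hcomp hmult
  refine ⟨C, fun A hA A' hA' μ μ' hμ0 hμ1 hμ hμ'0 hμ'1 hμ' => ?_⟩
  have hPμ := isPerronVector_of_l1norm_eq_one hμ0 hμ1 hμ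
  have hPμ' := isPerronVector_of_l1norm_eq_one hμ'0 hμ'1 hμ'
  rw [hPμ.eq_perronVector (hmult A hA).le, hPμ'.eq_perronVector (hmult A' hA').le]
  exact hC A ⟨hA, μ, hPμ⟩ A' ⟨hA', μ', hPμ'⟩

/-- Lemma (muLipprop2): Lipschitz continuity of the normalised principal
left-eigenvector on a compact set of nonnegative matrices with simple Perron root. -/
theorem principal_eigenvector_lipschitz_compact
    {k : ℕ} (hk : 0 < k) (𝔸 : Set (Matrix (Fin k) (Fin k) ℝ)) (hcomp : IsCompact 𝔸)
    (h𝔸 : ∀ A ∈ 𝔸, (∀ i j, 0 ≤ A i j) ∧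
      (Matrix.charpoly A).rootMultiplicity (perronRoot A) = 1) :
    ∃ C : ℝ, ∀ A ∈ 𝔸, ∀ A' ∈ 𝔸, ∀ μ μ' : Fin k → ℝ,
      (∀ i, 0 ≤ μ i) → l1norm μ = 1 → Matrix.vecMul μ A = perronRoot A • μ →
      (∀ i, 0 ≤ μ' i) → l1norm μ' = 1 → Matrix.vecMul μ' A' = perronRoot A' • μ' →
      l1norm (μ - μ') ≤ C * ⨆ i, ⨆ j, |A i j - A' i j| :=
  principal_eigenvector_lipschitz_compact_general 𝔸 hcomp h𝔸
end

section
/- Let A be a k×k matrix with strictly positive entries, let L ≥ 1 be an integer, and let θ > 0 satisfy min_{i,j∈[k]} A_{i,j} > θ. Let x^{(1)},…,x^{(L)} ∈ ℝ_{≥0}^k \ {0} be nonnegative nonzero vectors, let D^{(1)},…,D^{(L)} ∈ B_θ(A), and let p₁,…,p_L > 0 satisfy Σ_{l=1}^L p_l = 1. Then there exists a matrix D̄ ∈ B_θ(A) such that p₁ x^{(1)}D^{(1)} + … + p_L x^{(L)}D^{(L)} = (p₁ x^{(1)} + … + p_L x^{(L)}) D̄. -/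
open Matrix

/-!
Row `i` of `D̄` is a convex combination of the rows `i` of the `D⁽ˡ⁾`, with weights
proportional to `p_l x⁽ˡ⁾_i` (any weights will do when all of these vanish). Both conditions
defining `B_θ(A)` are entrywise convex, so `D̄ ∈ B_θ(A)`, and expanding `ȳ D̄` with
`ȳ = Σ p_l x⁽ˡ⁾` recovers `Σ p_l x⁽ˡ⁾ D⁽ˡ⁾`.
-/

open Finset

variable {ι : Type*} [Fintype ι]

theorem exists_mem_stdSimplex_sum_smul_eq [Nonempty ι] {c : ι → ℝ} (hc : ∀ l, 0 ≤ c l) :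
    ∃ w ∈ stdSimplex ℝ ι, (∑ l, c l) • w = c := by
  by_cases hsum : ∑ l, c l = 0
  · have hc0 : c = 0 := funext fun l =>
      (sum_eq_zero_iff_of_nonneg fun l _ => hc l).mp hsum l (mem_univ l)
    classical
    exact ⟨_, single_mem_stdSimplex ℝ (Classical.arbitrary ι), by rw [hsum, zero_smul, hc0]⟩
  · refine ⟨(∑ l, c l)⁻¹ • c, ⟨fun l => ?_, ?_⟩, smul_inv_smul₀ hsum c⟩
    · exact mul_nonneg (inv_nonneg.mpr (sum_nonneg fun l _ => hc l)) (hc l)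
    · simp only [Pi.smul_apply, smul_eq_mul, ← mul_sum, inv_mul_cancel₀ hsum]

theorem memBall_of_rows_mem_stdSimplex {k : ℕ} {θ : ℝ} {A : Matrix (Fin k) (Fin k) ℝ}
    {D : ι → Matrix (Fin k) (Fin k) ℝ} (hD : ∀ l, memBall θ A (D l))
    {w : Fin k → ι → ℝ} (hw : ∀ i, w i ∈ stdSimplex ℝ ι) :
    memBall θ A (of fun i j => ∑ l, w i l * D l i j) := by
  refine ⟨fun i j => ?_, fun i j => ?_⟩
  · simpa only [of_apply, smul_eq_mul, Set.mem_Ioi] using (convex_Ioi (0 : ℝ)).sum_mem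
      (fun l _ => (hw i).1 l) (hw i).2 (fun l _ => (hD l).1 i j)
  · have hmem := (convex_closedBall (A i j) θ).sum_mem (t := univ)
      (fun l _ => (hw i).1 l) (hw i).2
      (fun l _ => by simpa only [Metric.mem_closedBall, Real.dist_eq] using (hD l).2 i j)
    simpa only [of_apply, smul_eq_mul, Metric.mem_closedBall, Real.dist_eq] using hmem

theorem sum_smul_vecMul_eq_vecMul_of_rows {k : ℕ} (p : ι → ℝ) (x : ι → Fin k → ℝ)
    (D : ι → Matrix (Fin k) (Fin k) ℝ) {w : Fin k → ι → ℝ}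
    (hw : ∀ i, (∑ l, p l * x l i) • w i = fun l => p l * x l i) :
    ∑ l, p l • vecMul (x l) (D l) =
      vecMul (∑ l, p l • x l) (of fun i j => ∑ l, w i l * D l i j) := by
  ext j
  have hwil (i : Fin k) (l : ι) : (∑ l', p l' * x l' i) * w i l = p l * x l i :=
    congr_fun (hw i) l
  simp only [vecMul, dotProduct, Finset.sum_apply, Pi.smul_apply, of_apply, smul_eq_mul, mul_sum]
  rw [sum_comm]
  refine sum_congr rfl fun i _ => sum_congr rfl fun l _ => ?_
  rw [← mul_assoc, ← mul_assoc, hwil]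

theorem mix_matrices_general
    {k L : ℕ} (hL : 0 < L)
    (A : Matrix (Fin k) (Fin k) ℝ)
    (θ : ℝ)
    (x : Fin L → Fin k → ℝ) (hxnonneg : ∀ l i, 0 ≤ x l i)
    (D : Fin L → Matrix (Fin k) (Fin k) ℝ) (hD : ∀ l, memBall θ A (D l))
    (p : Fin L → ℝ) (hp : ∀ l, 0 < p l) :
    ∃ Dbar : Matrix (Fin k) (Fin k) ℝ, memBall θ A Dbar ∧
      ∑ l, p l • Matrix.vecMul (x l) (D l) = Matrix.vecMul (∑ l, p l • x l) Dbar := by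
  have : Nonempty (Fin L) := Fin.pos_iff_nonempty.mp hL
  choose w hw hyw using fun i => exists_mem_stdSimplex_sum_smul_eq
    (c := fun l => p l * x l i) fun l => mul_nonneg (hp l).le (hxnonneg l i)
  exact ⟨_, memBall_of_rows_mem_stdSimplex hD hw, sum_smul_vecMul_eq_vecMul_of_rows p x D hyw⟩

/-- Lemma 4.5 (mixmatrices): a convex combination of images of vectors under matrices
in B_θ(A) is the image of the corresponding convex combination under a single matrix
in B_θ(A). -/
theorem mix_matrices
    {k L : ℕ} (hk : 0 < k) (hL : 0 < L)
    (A : Matrix (Fin k) (Fin k) ℝ) (hA : ∀ i j, 0 < A i j)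
    (θ : ℝ) (hθ : 0 < θ) (hθA : ∀ i j, θ < A i j)
    (x : Fin L → Fin k → ℝ) (hxnonneg : ∀ l i, 0 ≤ x l i) (hxne : ∀ l, x l ≠ 0)
    (D : Fin L → Matrix (Fin k) (Fin k) ℝ) (hD : ∀ l, memBall θ A (D l))
    (p : Fin L → ℝ) (hp : ∀ l, 0 < p l) (hpsum : ∑ l, p l = 1) :
    ∃ Dbar : Matrix (Fin k) (Fin k) ℝ, memBall θ A Dbar ∧
      ∑ l, p l • Matrix.vecMul (x l) (D l) = Matrix.vecMul (∑ l, p l • x l) Dbar :=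
  mix_matrices_general hL A θ x hxnonneg D hD p hp
end

section
/- For all real numbers 0 < η < T < ∞ with η < 1, and every δ > 0, there exist θ ∈ (0, η²) and an integer R ≥ 1 such that: for every v ∈ ℝ_{≥0}^k \ {0}, every k×k matrix κ with all entries in [η,T], every π ∈ Π_{≤1} with π_i ∈ [η,1] for all i ∈ [k], and all matrices D^{(1)},…,D^{(R)} ∈ B_θ(κ∘π), one has ‖ vD^{(1)}⋯D^{(R)} / ‖vD^{(1)}⋯D^{(R)}‖₁ − μ(κ∘π) ‖₁ < δ. -/
open Matrix

/-!
Write `A = κ ∘ π` and `μ A = r μ`, so `r μ_j ∈ [η², T]`. Every `D ∈ B_θ(A)` is bounded below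
by `g · r μ_j` with `g = η² / (2T)` (a Doeblin minorization), and `μ D = r μ` up to a relative
error `ε = θ / η²`. If `m μ ≤ x ≤ q m μ`, splitting `x = m μ + (x - m μ)` and using the
minorization on the nonnegative part gives `m' μ ≤ x D ≤ q' m' μ` with
`q' - 1 = (1 - g/2)(q - 1) + 4ε`. So `q - 1` contracts geometrically down to `8ε / g`, which is
small with `θ`. One factor `D` already pinches the nonnegative `v` around `μ` with a ratio
depending only on `η` and `T`, and a pinching ratio `q` bounds the `ℓ¹` distance of the
normalized vector from `μ` by `q - 1`.
-/

namespace Matrix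

variable {ι κ R : Type*} [Fintype ι] {j : κ}

section OrderedSemiring

variable [CommSemiring R] [PartialOrder R] [IsOrderedRing R] {z : ι → R} {B : Matrix ι κ R} {c : R}

theorem sum_mul_le_vecMul_apply (hz : 0 ≤ z) (hB : ∀ i, c ≤ B i j) :
    (∑ i, z i) * c ≤ (z ᵥ* B) j := by
  rw [Finset.sum_mul]
  exact Finset.sum_le_sum fun i _ => mul_le_mul_of_nonneg_left (hB i) (hz i)

theorem vecMul_apply_le_sum_mul (hz : 0 ≤ z) (hB : ∀ i, B i j ≤ c) :
    (z ᵥ* B) j ≤ (∑ i, z i) * c := by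
  rw [Finset.sum_mul]
  exact Finset.sum_le_sum fun i _ => mul_le_mul_of_nonneg_left (hB i) (hz i)

end OrderedSemiring

theorem abs_vecMul_apply_sub_le [CommRing R] [LinearOrder R] [IsOrderedRing R] {z : ι → R}
    {A B : Matrix ι κ R} {θ : R} (hz : 0 ≤ z) (hAB : ∀ i, |B i j - A i j| ≤ θ) :
    |(z ᵥ* B) j - (z ᵥ* A) j| ≤ (∑ i, z i) * θ := by
  rw [← Pi.sub_apply, ← vecMul_sub, abs_le, ← mul_neg]
  exact ⟨sum_mul_le_vecMul_apply hz fun i => (abs_le.1 (hAB i)).1,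
    vecMul_apply_le_sum_mul hz fun i => (abs_le.1 (hAB i)).2⟩

theorem mul_apply_mem_Icc_of_vecMul_eq_smul {μ : ι → ℝ} {A : Matrix ι ι ℝ} {r α β : ℝ}
    (hμ : 0 ≤ μ) (hμ1 : ∑ i, μ i = 1) (hA : ∀ i j, A i j ∈ Set.Icc α β) (hμA : μ ᵥ* A = r • μ)
    (j : ι) : r * μ j ∈ Set.Icc α β := by
  have hj : r * μ j = (μ ᵥ* A) j := by rw [hμA]; rfl
  rw [hj]
  exact ⟨by simpa [hμ1] using sum_mul_le_vecMul_apply hμ fun i => (hA i j).1,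
    by simpa [hμ1] using vecMul_apply_le_sum_mul hμ fun i => (hA i j).2⟩

end Matrix

theorem sum_mem_Icc_of_smul_le_of_le_smul {ι : Type*} [Fintype ι] {μ x : ι → ℝ} {m M : ℝ}
    (hμ1 : ∑ i, μ i = 1) (hlo : m • μ ≤ x) (hhi : x ≤ M • μ) : ∑ i, x i ∈ Set.Icc m M := by
  have hlo' := Finset.sum_le_sum fun i (_ : i ∈ Finset.univ) => hlo i
  have hhi' := Finset.sum_le_sum fun i (_ : i ∈ Finset.univ) => hhi i
  simp only [Pi.smul_apply, smul_eq_mul, ← Finset.mul_sum, hμ1, mul_one] at hlo' hhi'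
  exact ⟨hlo', hhi'⟩

def IsDoeblin {ι : Type*} [Fintype ι] (μ : ι → ℝ) (r g ε : ℝ) (B : Matrix ι ι ℝ) : Prop :=
  (∀ i j, g * (r * μ j) ≤ B i j) ∧ ∀ j, |(μ ᵥ* B) j - r * μ j| ≤ ε * (r * μ j)

/-- `log q` bounds the Hilbert projective distance from `x` to `μ`. -/
def Pinched {ι : Type*} (μ : ι → ℝ) (q : ℝ) (x : ι → ℝ) : Prop :=
  ∃ m : ℝ, 0 < m ∧ m • μ ≤ x ∧ x ≤ (q * m) • μ

-- `g W + (1 - g ± ε) m` are the pinching constants of `x B` in `Pinched.vecMul`, `W = ∑ x`.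
theorem doeblin_ratio_bound {g ε q m W : ℝ} (hε : 0 ≤ ε) (hεg : 4 * ε ≤ g) (hg1 : g ≤ 1)
    (hm : 0 < m) (hmW : m ≤ W) (hWq : W ≤ q * m) :
    g * W + (1 - g + ε) * (q * m) ≤
      (1 + (1 - g / 2) * (q - 1) + 4 * ε) * (g * W + (1 - g - ε) * m) := by
  have hq : 1 ≤ q := by nlinarith
  nlinarith [mul_nonneg (mul_nonneg (sub_nonneg.2 hmW) (by linarith : (0 : ℝ) ≤ g))
      (by nlinarith : (0 : ℝ) ≤ (1 - g / 2) * (q - 1) + 4 * ε),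
    mul_nonneg hm.le (mul_nonneg hε (by linarith : (0 : ℝ) ≤ 1 - 2 * ε)),
    mul_nonneg hm.le (mul_nonneg (sub_nonneg.2 hq)
      (by nlinarith : (0 : ℝ) ≤ g / 2 - 2 * ε + g * ε / 2))]

namespace Pinched

variable {ι : Type*} {μ x : ι → ℝ} {q : ℝ}

theorem mono (hμ : 0 ≤ μ) (h : Pinched μ q x) {q' : ℝ} (hq : q ≤ q') : Pinched μ q' x := by
  obtain ⟨m, hm, hlo, hhi⟩ := h
  exact ⟨m, hm, hlo, hhi.trans fun i => by
    simpa using mul_le_mul_of_nonneg_right (mul_le_mul_of_nonneg_right hq hm.le) (hμ i)⟩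

variable [Fintype ι]

theorem vecMul {B : Matrix ι ι ℝ} {r g ε : ℝ} (hμ : 0 ≤ μ) (hμ1 : ∑ i, μ i = 1) (hr : 0 < r)
    (hε : 0 ≤ ε) (hεg : 4 * ε ≤ g) (hg1 : g ≤ 1) (hB : IsDoeblin μ r g ε B)
    (h : Pinched μ q x) : Pinched μ (1 + (1 - g / 2) * (q - 1) + 4 * ε) (x ᵥ* B) := by
  obtain ⟨hBg, hμB⟩ := hB
  obtain ⟨m, hm, hlo, hhi⟩ := h
  obtain ⟨hmW, hWq⟩ := sum_mem_Icc_of_smul_le_of_le_smul hμ1 hlo hhi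
  set W := ∑ i, x i
  have hlower : ∀ j, r * μ j * (g * W + (1 - g - ε) * m) ≤ (x ᵥ* B) j := fun j => by
    have hz := sum_mul_le_vecMul_apply (sub_nonneg.2 hlo) (hBg · j)
    simp only [Pi.sub_apply, Pi.smul_apply, smul_eq_mul, Finset.sum_sub_distrib,
      ← Finset.mul_sum, hμ1, sub_vecMul, smul_vecMul] at hz
    nlinarith [(abs_sub_le_iff.1 (hμB j)).2]
  have hupper : ∀ j, (x ᵥ* B) j ≤ r * μ j * (g * W + (1 - g + ε) * (q * m)) := fun j => by
    have hz := sum_mul_le_vecMul_apply (sub_nonneg.2 hhi) (hBg · j)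
    simp only [Pi.sub_apply, Pi.smul_apply, smul_eq_mul, Finset.sum_sub_distrib,
      ← Finset.mul_sum, hμ1, sub_vecMul, smul_vecMul] at hz
    nlinarith [(abs_sub_le_iff.1 (hμB j)).1]
  have hpos : 0 < g * W + (1 - g - ε) * m := by nlinarith
  refine ⟨r * (g * W + (1 - g - ε) * m), by positivity, fun j => ?_, fun j => ?_⟩
  · simpa only [Pi.smul_apply, smul_eq_mul, mul_right_comm r] using hlower j
  · have := mul_le_mul_of_nonneg_left (doeblin_ratio_bound hε hεg hg1 hm hmW hWq)
      (mul_nonneg hr.le (hμ j))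
    simp only [Pi.smul_apply, smul_eq_mul]
    linarith [hupper j]

theorem vecMul_list_prod [DecidableEq ι] {r g ε d : ℝ} {l : List (Matrix ι ι ℝ)}
    (hμ : 0 ≤ μ) (hμ1 : ∑ i, μ i = 1) (hr : 0 < r) (hε : 0 ≤ ε) (hεg : 4 * ε ≤ g) (hg : 0 < g)
    (hg1 : g ≤ 1) (hl : ∀ B ∈ l, IsDoeblin μ r g ε B) (h : Pinched μ (1 + d + 8 * ε / g) x) :
    Pinched μ (1 + (1 - g / 2) ^ l.length * d + 8 * ε / g) (x ᵥ* l.prod) := by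
  induction l generalizing x d with
  | nil => simpa using h
  | cons B l ih =>
    have hstep := h.vecMul hμ hμ1 hr hε hεg hg1 (hl B List.mem_cons_self)
    -- `8ε/g` is the fixed point of `t ↦ (1 - g/2) t + 4ε`
    have hfix : 1 + (1 - g / 2) * (1 + d + 8 * ε / g - 1) + 4 * ε =
        1 + (1 - g / 2) * d + 8 * ε / g := by
      field_simp; ring
    rw [hfix] at hstep
    rw [List.prod_cons, ← vecMul_vecMul, List.length_cons, pow_succ, mul_assoc]
    exact ih (fun B' hB' => hl B' (List.mem_cons_of_mem B hB')) hstep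

theorem sum_abs_inv_smul_sub_le (hμ : 0 ≤ μ) (hμ1 : ∑ i, μ i = 1) (h : Pinched μ q x) :
    ∑ i, |((∑ j, |x j|)⁻¹ • x - μ) i| ≤ q - 1 := by
  obtain ⟨m, hm, hlo, hhi⟩ := h
  obtain ⟨hmW, hWq⟩ := sum_mem_Icc_of_smul_le_of_le_smul hμ1 hlo hhi
  have habs : ∀ j, |x j| = x j := fun j => abs_of_nonneg ((smul_nonneg hm.le hμ j).trans (hlo j))
  simp only [habs]
  set W := ∑ i, x i
  have hW : 0 < W := hm.trans_le hmW
  have hq : 0 ≤ q - 1 := by nlinarith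
  calc ∑ i, |(W⁻¹ • x - μ) i| ≤ ∑ i, (q - 1) * μ i := Finset.sum_le_sum fun i _ => by
        have hlo := hlo i
        have hhi := hhi i
        simp only [Pi.smul_apply, smul_eq_mul] at hlo hhi
        have hdev : |x i - W * μ i| ≤ (q - 1) * m * μ i :=
          abs_sub_le_iff.2 ⟨by nlinarith [mul_le_mul_of_nonneg_right hmW (hμ i)],
            by nlinarith [mul_le_mul_of_nonneg_right hWq (hμ i)]⟩
        have hdiv : W⁻¹ * x i - μ i = (x i - W * μ i) / W := by field_simp
        rw [Pi.sub_apply, Pi.smul_apply, smul_eq_mul, hdiv, abs_div, abs_of_pos hW,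
          div_le_iff₀ hW]
        calc |x i - W * μ i| ≤ (q - 1) * m * μ i := hdev
          _ ≤ (q - 1) * W * μ i := by gcongr; exact hμ i
          _ = (q - 1) * μ i * W := by ring
    _ = q - 1 := by rw [← Finset.mul_sum, hμ1, mul_one]

end Pinched

theorem pinched_vecMul_of_nonneg {ι : Type*} [Fintype ι] {v μ : ι → ℝ} {B : Matrix ι ι ℝ}
    {a b c C r : ℝ} (hv : 0 ≤ v) (hv0 : v ≠ 0) (ha : 0 < a) (hc : 0 < c) (hr : 0 < r)
    (hB : ∀ i j, B i j ∈ Set.Icc a b) (hμ : ∀ j, r * μ j ∈ Set.Icc c C) :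
    Pinched μ (b * C / (a * c)) (v ᵥ* B) := by
  obtain ⟨i₀, hi₀⟩ := Function.ne_iff.1 hv0
  have hW : 0 < ∑ i, v i := (lt_of_le_of_ne (hv i₀) (Ne.symm hi₀)).trans_le
    (Finset.single_le_sum (fun i _ => hv i) (Finset.mem_univ i₀))
  have hb : 0 < b := ha.trans_le ((hB i₀ i₀).1.trans (hB i₀ i₀).2)
  have hC : 0 < C := hc.trans_le ((hμ i₀).1.trans (hμ i₀).2)
  refine ⟨a * (∑ i, v i) * r / C, by positivity, fun j => ?_, fun j => ?_⟩
  · calc (a * (∑ i, v i) * r / C) • μ j = (∑ i, v i) * a * (r * μ j / C) := by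
          simp only [smul_eq_mul]; ring
      _ ≤ (∑ i, v i) * a * 1 := by gcongr; exact (div_le_one hC).2 (hμ j).2
      _ ≤ (v ᵥ* B) j := by simpa using sum_mul_le_vecMul_apply hv fun i => (hB i j).1
  · calc (v ᵥ* B) j ≤ (∑ i, v i) * b * 1 := by
          simpa using vecMul_apply_le_sum_mul hv fun i => (hB i j).2
      _ ≤ (∑ i, v i) * b * (r * μ j / c) := by gcongr; exact (one_le_div hc).2 (hμ j).1
      _ = ((b * C / (a * c)) * (a * (∑ i, v i) * r / C)) • μ j := by
          simp only [smul_eq_mul]; field_simp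

theorem circ_apply_mem_Icc {k : ℕ} {A : Matrix (Fin k) (Fin k) ℝ} {v : Fin k → ℝ} {a b c d : ℝ}
    (ha : 0 ≤ a) (hc : 0 ≤ c) (hA : ∀ i j, A i j ∈ Set.Icc a b) (hv : ∀ j, v j ∈ Set.Icc c d)
    (i j : Fin k) : circ A v i j ∈ Set.Icc (a * c) (b * d) :=
  ⟨mul_le_mul (hA i j).1 (hv j).1 hc (ha.trans (hA i j).1),
    mul_le_mul (hA i j).2 (hv j).2 (hc.trans (hv j).1) (ha.trans ((hA i j).1.trans (hA i j).2))⟩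

namespace memBall

variable {k : ℕ} {θ : ℝ} {A D : Matrix (Fin k) (Fin k) ℝ}

theorem apply_mem_Icc (hD : memBall θ A D) {α β : ℝ} (hA : ∀ i j, A i j ∈ Set.Icc α β)
    (i j : Fin k) : D i j ∈ Set.Icc (α - θ) (β + θ) := by
  have := abs_le.1 (hD.2 i j)
  constructor <;> linarith [(hA i j).1, (hA i j).2]

theorem abs_vecMul_apply_sub_le (hD : memBall θ A D) {μ : Fin k → ℝ} {r : ℝ} (hμ : 0 ≤ μ)
    (hμ1 : ∑ i, μ i = 1) (hμA : μ ᵥ* A = r • μ) (j : Fin k) :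
    |(μ ᵥ* D) j - r * μ j| ≤ θ := by
  have hj : r * μ j = (μ ᵥ* A) j := by rw [hμA]; rfl
  simpa [hj, hμ1] using Matrix.abs_vecMul_apply_sub_le hμ fun i => hD.2 i j

theorem isDoeblin (hD : memBall θ A D) {μ : Fin k → ℝ} {r α β g ε : ℝ} (hμ : 0 ≤ μ)
    (hμ1 : ∑ i, μ i = 1) (hA : ∀ i j, A i j ∈ Set.Icc α β) (hμA : μ ᵥ* A = r • μ) (hg : 0 ≤ g)
    (hε : 0 ≤ ε) (hgβ : g * β ≤ α - θ) (hθα : θ ≤ ε * α) : IsDoeblin μ r g ε D := by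
  have hrμ := mul_apply_mem_Icc_of_vecMul_eq_smul hμ hμ1 hA hμA
  refine ⟨fun i j => ?_, fun j => ?_⟩
  · linarith [mul_le_mul_of_nonneg_left (hrμ j).2 hg, (hD.apply_mem_Icc hA i j).1]
  · linarith [mul_le_mul_of_nonneg_left (hrμ j).1 hε, hD.abs_vecMul_apply_sub_le hμ hμ1 hμA j]

end memBall

theorem product_direction_close_to_eigenvector_general
    {k : ℕ} (η T : ℝ) (hη : 0 < η) (hη1 : η < 1) (hηT : η < T)
    (δ : ℝ) (hδ : 0 < δ) :
    ∃ (θ : ℝ) (R : ℕ), 0 < θ ∧ θ < η ^ 2 ∧ 1 ≤ R ∧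
      ∀ v : Fin k → ℝ, (∀ i, 0 ≤ v i) → v ≠ 0 →
      ∀ κ : Matrix (Fin k) (Fin k) ℝ, (∀ i j, κ i j ∈ Set.Icc η T) →
      ∀ π : Fin k → ℝ, (∀ i, π i ∈ Set.Icc η 1) → ∑ i, π i ≤ 1 →
      ∀ D : Fin R → Matrix (Fin k) (Fin k) ℝ, (∀ r, memBall θ (circ κ π) (D r)) →
      ∀ μ : Fin k → ℝ, (∀ i, 0 < μ i) → l1norm μ = 1 →
        (∃ r : ℝ, 0 < r ∧ Matrix.vecMul μ (circ κ π) = r • μ) →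
      l1norm ((l1norm (Matrix.vecMul v (List.ofFn D).prod))⁻¹ •
          Matrix.vecMul v (List.ofFn D).prod - μ) < δ := by
  have hT : 0 < T := hη.trans hηT
  have hη2 : η ^ 2 < T := by nlinarith
  obtain ⟨s, hs0, hs1, hsδ⟩ : ∃ s : ℝ, 0 < s ∧ s ≤ 1 ∧ s ≤ δ / 4 :=
    ⟨min 1 (δ / 4), by positivity, min_le_left _ _, min_le_right _ _⟩
  set g := η ^ 2 / (2 * T) with hg
  set ε := g * s / 4 with hε
  set θ := η ^ 2 * ε with hθ
  set q₀ := (T + θ) * T / (η ^ 2 / 2 * η ^ 2)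
  have hg0 : 0 < g := by positivity
  have hg1 : g ≤ 1 := by rw [hg, div_le_one (by positivity)]; linarith
  have hgT : g * T = η ^ 2 / 2 := by rw [hg]; field_simp
  have hεg : 4 * ε ≤ g := by rw [hε]; nlinarith
  have hεδ : 8 * ε / g ≤ δ / 2 := by rw [hε, div_le_iff₀ hg0]; nlinarith
  have hθη : θ ≤ η ^ 2 / 2 := by rw [hθ]; nlinarith
  obtain ⟨n, hn⟩ := exists_pow_lt_of_lt_one (by positivity : 0 < δ / 2 / q₀)
    (by linarith : 1 - g / 2 < 1)
  rw [lt_div_iff₀ (by positivity)] at hn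
  refine ⟨θ, n + 1, by positivity, by linarith [pow_pos hη 2], le_add_self, ?_⟩
  intro v hv hv0 κ hκ π hπ _ D hD μ hμ hμl1 ⟨r, hr, hμA⟩
  have hμ0 : 0 ≤ μ := fun i => (hμ i).le
  have hμ1 : ∑ i, μ i = 1 := by
    rw [← hμl1]; exact Finset.sum_congr rfl fun i _ => (abs_of_pos (hμ i)).symm
  have hA : ∀ i j, circ κ π i j ∈ Set.Icc (η ^ 2) T := by
    simpa [sq] using circ_apply_mem_Icc hη.le hη.le hκ hπ
  have hDoeblin : ∀ t, IsDoeblin μ r g ε (D t) := fun t =>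
    (hD t).isDoeblin hμ0 hμ1 hA hμA hg0.le (by positivity) (by linarith) (by rw [hθ, mul_comm])
  have h₀ : Pinched μ q₀ (v ᵥ* D 0) :=
    pinched_vecMul_of_nonneg hv hv0 (by positivity) (by positivity) hr
      (fun i j => Set.Icc_subset_Icc_left (by linarith) ((hD 0).apply_mem_Icc hA i j))
      (mul_apply_mem_Icc_of_vecMul_eq_smul hμ0 hμ1 hA hμA)
  have hq₀ : q₀ ≤ 1 + q₀ + 8 * ε / g := by linarith [(by positivity : 0 ≤ 8 * ε / g)]
  have hfin := (h₀.mono hμ0 hq₀).vecMul_list_prod hμ0 hμ1 hr (by positivity) hεg hg0 hg1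
    (l := List.ofFn fun i : Fin n => D i.succ) (by simpa using fun i : Fin n => hDoeblin i.succ)
  rw [vecMul_vecMul, ← List.prod_cons, ← List.ofFn_succ, List.length_ofFn] at hfin
  exact (hfin.sum_abs_inv_smul_sub_le hμ0 hμ1).trans_lt (by linarith)

/-- Lemma 4.6 (convevector): the image of any nonnegative nonzero vector under a long
product of matrices close to κ∘π has direction close to the principal left-eigenvector
μ(κ∘π). -/
theorem product_direction_close_to_eigenvector
    {k : ℕ} (hk : 0 < k) (η T : ℝ) (hη : 0 < η) (hη1 : η < 1) (hηT : η < T)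
    (δ : ℝ) (hδ : 0 < δ) :
    ∃ (θ : ℝ) (R : ℕ), 0 < θ ∧ θ < η ^ 2 ∧ 1 ≤ R ∧
      ∀ v : Fin k → ℝ, (∀ i, 0 ≤ v i) → v ≠ 0 →
      ∀ κ : Matrix (Fin k) (Fin k) ℝ, (∀ i j, κ i j ∈ Set.Icc η T) →
      ∀ π : Fin k → ℝ, (∀ i, π i ∈ Set.Icc η 1) → ∑ i, π i ≤ 1 →
      ∀ D : Fin R → Matrix (Fin k) (Fin k) ℝ, (∀ r, memBall θ (circ κ π) (D r)) →
      ∀ μ : Fin k → ℝ, (∀ i, 0 < μ i) → l1norm μ = 1 →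
        (∃ r : ℝ, 0 < r ∧ Matrix.vecMul μ (circ κ π) = r • μ) →
      l1norm ((l1norm (Matrix.vecMul v (List.ofFn D).prod))⁻¹ •
          Matrix.vecMul v (List.ofFn D).prod - μ) < δ :=
  product_direction_close_to_eigenvector_general η T hη hη1 hηT δ hδ
end

section
/- Fix real numbers 0 < η ≤ 1 and T with η < T < ∞. For every δ > 0 there exists R₀ ∈ ℕ such that for every integer R ≥ R₀, every k×k matrix κ with all entries in [η,T], every π ∈ Π_{≤1} with π_i ≥ η for all i ∈ [k], and every v ∈ Π₁: ‖ v(κ∘π)^R / ‖v(κ∘π)^R‖₁ − μ(κ∘π) ‖₁ < δ. -/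
open Matrix

/-!
Let `M = κ∘π`, with entries in `[a, b] = [η², T]`, and let `μ M = r μ`. The matrix
`P i j = μ j M j i / (r μ i)` is stochastic, and `v M^R = r^R μ ⊙ P^R (v / μ)`. The eigen-equation
forces `μ i ≥ a / (k b)`, so every entry of `P` is at least `γ = a² / (k b²)`, a constant that
does not depend on `κ`, `π` or `v`. Averaging with weights `≥ γ` shrinks the spread
`max - min` of a vector by the factor `1 - γ` and, from the first step on, keeps its entries
`≥ γ`. Hence `P^R (v / μ)` is uniformly close to a constant vector, which says exactly that
the direction of `v M^R` is uniformly close to `μ`.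
-/

open Finset

section WeightedSums

variable {ι : Type*} [Fintype ι] {c x : ι → ℝ}

lemma le_sum_mul_of_forall_le (hc0 : ∀ j, 0 ≤ c j) (hc1 : ∑ j, c j = 1) {m : ℝ}
    (hx : ∀ j, m ≤ x j) : m ≤ ∑ j, c j * x j :=
  calc m = ∑ j, c j * m := by rw [← sum_mul, hc1, one_mul]
    _ ≤ ∑ j, c j * x j := sum_le_sum fun j _ => mul_le_mul_of_nonneg_left (hx j) (hc0 j)

lemma sum_mul_le_of_forall_le (hc0 : ∀ j, 0 ≤ c j) (hc1 : ∑ j, c j = 1) {M : ℝ}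
    (hx : ∀ j, x j ≤ M) : ∑ j, c j * x j ≤ M :=
  calc ∑ j, c j * x j ≤ ∑ j, c j * M :=
        sum_le_sum fun j _ => mul_le_mul_of_nonneg_left (hx j) (hc0 j)
    _ = M := by rw [← sum_mul, hc1, one_mul]

/-- The weight `≥ γ` sitting on `x j₀` pulls the average away from the upper bound `x j₀ + D`. -/
lemma sum_mul_le_add_of_forall_le_add {γ D : ℝ} (hγ : 0 ≤ γ) (hc : ∀ j, γ ≤ c j)
    (hc1 : ∑ j, c j = 1) (j₀ : ι) (hx : ∀ j, x j ≤ x j₀ + D) :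
    ∑ j, c j * x j ≤ x j₀ + (1 - γ) * D := by
  have hc0 : ∀ j, 0 ≤ c j := fun j => hγ.trans (hc j)
  have hD : 0 ≤ D := by linarith [hx j₀]
  have hgap : c j₀ * D ≤ ∑ j, c j * (x j₀ + D - x j) := by
    simpa using single_le_sum (fun j _ => mul_nonneg (hc0 j) (sub_nonneg.2 (hx j)))
      (mem_univ j₀)
  have hexpand : ∑ j, c j * (x j₀ + D - x j) = x j₀ + D - ∑ j, c j * x j := by
    simp only [mul_sub, sum_sub_distrib, ← sum_mul, hc1, one_mul]
  linarith [mul_le_mul_of_nonneg_right (hc j₀) hD]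

end WeightedSums

section Stochastic

variable {ι : Type*} [Fintype ι] {P : Matrix ι ι ℝ} {γ : ℝ}

lemma mulVec_sub_mulVec_le (hγ : 0 ≤ γ) (hP : ∀ i j, γ ≤ P i j) (hP1 : ∀ i, ∑ j, P i j = 1)
    {x : ι → ℝ} {D : ℝ} (hx : ∀ i j, x i - x j ≤ D) (i j : ι) :
    (P *ᵥ x) i - (P *ᵥ x) j ≤ (1 - γ) * D := by
  have : Nonempty ι := ⟨i⟩
  obtain ⟨j₀, hj₀⟩ := Finite.exists_min x
  have hup := sum_mul_le_add_of_forall_le_add (x := x) (D := D) hγ (hP i) (hP1 i) j₀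
    fun l => by linarith [hx l j₀]
  have hlow := le_sum_mul_of_forall_le (fun l => hγ.trans (hP j l)) (hP1 j) hj₀
  simp only [mulVec, dotProduct]
  linarith

lemma pow_mulVec_sub_pow_mulVec_le [DecidableEq ι] (hγ : 0 ≤ γ) (hP : ∀ i j, γ ≤ P i j)
    (hP1 : ∀ i, ∑ j, P i j = 1) {x : ι → ℝ} {D : ℝ} (hx : ∀ i j, x i - x j ≤ D) (R : ℕ)
    (i j : ι) : (P ^ R *ᵥ x) i - (P ^ R *ᵥ x) j ≤ (1 - γ) ^ R * D := by
  induction R generalizing i j with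
  | zero => simpa using hx i j
  | succ R ih =>
    rw [pow_succ', ← mulVec_mulVec, pow_succ', mul_assoc]
    exact mulVec_sub_mulVec_le hγ hP hP1 ih i j

lemma mul_sum_le_pow_succ_mulVec [DecidableEq ι] (hγ : 0 ≤ γ) (hP : ∀ i j, γ ≤ P i j)
    (hP1 : ∀ i, ∑ j, P i j = 1) {x : ι → ℝ} (hx : ∀ j, 0 ≤ x j) (R : ℕ) (i : ι) :
    γ * ∑ j, x j ≤ (P ^ (R + 1) *ᵥ x) i := by
  induction R generalizing i with
  | zero =>
    rw [zero_add, pow_one]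
    simp only [mulVec, dotProduct, mul_sum]
    exact sum_le_sum fun j _ => mul_le_mul_of_nonneg_right (hP i j) (hx j)
  | succ R ih =>
    rw [pow_succ', ← mulVec_mulVec]
    exact le_sum_mul_of_forall_le (fun j => hγ.trans (hP i j)) (hP1 i) ih

end Stochastic

section DoobTransform

variable {ι : Type*} [Fintype ι] {M : Matrix ι ι ℝ} {μ : ι → ℝ} {r : ℝ}

noncomputable def doobTransform (M : Matrix ι ι ℝ) (μ : ι → ℝ) (r : ℝ) : Matrix ι ι ℝ :=
  of fun i j => μ j * M j i / (r * μ i)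

lemma sum_doobTransform_apply (hμ : ∀ i, μ i ≠ 0) (hr : r ≠ 0) (heig : vecMul μ M = r • μ)
    (i : ι) : ∑ j, doobTransform M μ r i j = 1 := by
  have hi := congrFun heig i
  rw [vecMul_apply_eq_sum, Pi.smul_apply, smul_eq_mul] at hi
  simp only [doobTransform, of_apply]
  rw [← sum_div, hi, div_self (mul_ne_zero hr (hμ i))]

lemma vecMul_pow_eq_doobTransform [DecidableEq ι] (hμ : ∀ i, μ i ≠ 0) (hr : r ≠ 0)
    (v : ι → ℝ) (R : ℕ) (i : ι) :
    vecMul v (M ^ R) i = r ^ R * μ i * (doobTransform M μ r ^ R *ᵥ fun j => v j / μ j) i := by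
  induction R generalizing i with
  | zero => simp [mul_div_cancel₀ _ (hμ i)]
  | succ R ih =>
    rw [pow_succ M, ← vecMul_vecMul, vecMul_apply_eq_sum, pow_succ' (doobTransform M μ r),
      ← mulVec_mulVec, pow_succ r, mulVec, dotProduct, mul_sum]
    refine sum_congr rfl fun j _ => ?_
    rw [ih]
    generalize (doobTransform M μ r ^ R *ᵥ fun j => v j / μ j) j = s
    simp only [doobTransform, of_apply]
    field_simp [hμ i]

end DoobTransform

section PositiveEigenvector

variable {ι : Type*} [Fintype ι] {M : Matrix ι ι ℝ} {μ : ι → ℝ} {r a b : ℝ}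

lemma mul_apply_mem_Icc_of_vecMul_eq_smul (hM : ∀ i j, M i j ∈ Set.Icc a b)
    (hμ0 : ∀ i, 0 ≤ μ i) (hμ1 : ∑ i, μ i = 1) (heig : vecMul μ M = r • μ) (i : ι) :
    r * μ i ∈ Set.Icc a b := by
  have hi := congrFun heig i
  rw [vecMul_apply_eq_sum, Pi.smul_apply, smul_eq_mul] at hi
  rw [← hi]
  exact ⟨le_sum_mul_of_forall_le hμ0 hμ1 fun j => (hM j i).1,
    sum_mul_le_of_forall_le hμ0 hμ1 fun j => (hM j i).2⟩

lemma div_le_apply_of_vecMul_eq_smul (ha : 0 ≤ a) (hM : ∀ i j, M i j ∈ Set.Icc a b)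
    (hμ0 : ∀ i, 0 ≤ μ i) (hμ1 : ∑ i, μ i = 1) (hr : 0 < r) (heig : vecMul μ M = r • μ)
    (i : ι) : a / (Fintype.card ι * b) ≤ μ i := by
  have hbound := mul_apply_mem_Icc_of_vecMul_eq_smul hM hμ0 hμ1 heig
  have hr_le : r ≤ Fintype.card ι * b :=
    calc r = ∑ j, r * μ j := by rw [← mul_sum, hμ1, mul_one]
      _ ≤ ∑ _j : ι, b := sum_le_sum fun j _ => (hbound j).2
      _ = Fintype.card ι * b := by simp
  calc a / (Fintype.card ι * b) ≤ a / r := div_le_div_of_nonneg_left ha hr hr_le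
    _ ≤ μ i := by rw [div_le_iff₀' hr]; exact (hbound i).1

lemma le_doobTransform_apply (ha : 0 ≤ a) (hM : ∀ i j, M i j ∈ Set.Icc a b)
    (hμ0 : ∀ i, 0 < μ i) (hμ1 : ∑ i, μ i = 1) (hr : 0 < r) (heig : vecMul μ M = r • μ)
    (i j : ι) : a ^ 2 / (Fintype.card ι * b ^ 2) ≤ doobTransform M μ r i j := by
  have hbound := mul_apply_mem_Icc_of_vecMul_eq_smul hM (fun l => (hμ0 l).le) hμ1 heig
  have hμj := div_le_apply_of_vecMul_eq_smul ha hM (fun l => (hμ0 l).le) hμ1 hr heig j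
  have hri : 0 < r * μ i := mul_pos hr (hμ0 i)
  have hb : 0 < b := hri.trans_le (hbound i).2
  calc a ^ 2 / (Fintype.card ι * b ^ 2) = a / (Fintype.card ι * b) * a / b := by ring
    _ ≤ μ j * M j i / (r * μ i) :=
      div_le_div₀ (mul_nonneg (hμ0 j).le (ha.trans (hM j i).1))
        (mul_le_mul hμj (hM j i).1 ha (hμ0 j).le) hri (hbound i).2

end PositiveEigenvector

lemma circ_mem_Icc {k : ℕ} {κ : Matrix (Fin k) (Fin k) ℝ} {π : Fin k → ℝ} {a b c : ℝ}
    (ha : 0 ≤ a) (hc : 0 ≤ c) (hκ : ∀ i j, κ i j ∈ Set.Icc a b) (hπ : ∀ j, π j ∈ Set.Icc c 1)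
    (i j : Fin k) : circ κ π i j ∈ Set.Icc (a * c) b :=
  ⟨mul_le_mul (hκ i j).1 (hπ j).1 hc (ha.trans (hκ i j).1),
    (mul_le_of_le_one_right (ha.trans (hκ i j).1) (hπ j).2).trans (hκ i j).2⟩

lemma l1norm_inv_smul_sub_le {k : ℕ} {μ u w : Fin k → ℝ} {s m D : ℝ} (hμ0 : ∀ i, 0 ≤ μ i)
    (hμ1 : ∑ i, μ i = 1) (hs : 0 < s) (hm : 0 < m) (hu : ∀ i, m ≤ u i)
    (hD : ∀ i j, u i - u j ≤ D) (hw : ∀ i, w i = s * μ i * u i) :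
    l1norm ((l1norm w)⁻¹ • w - μ) ≤ D / m := by
  set S := ∑ i, μ i * u i
  have hmS : m ≤ S := le_sum_mul_of_forall_le hμ0 hμ1 hu
  have hS : 0 < S := hm.trans_le hmS
  have hdev : ∀ i, |u i - S| ≤ D := fun i => abs_sub_le_iff.2
    ⟨by linarith [le_sum_mul_of_forall_le hμ0 hμ1 fun j => (by linarith [hD i j] : u i - D ≤ u j)],
     by linarith [sum_mul_le_of_forall_le hμ0 hμ1 fun j => (by linarith [hD j i] : u j ≤ u i + D)]⟩
  have hsum : ∑ i, μ i * |u i - S| ≤ D := sum_mul_le_of_forall_le hμ0 hμ1 hdev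
  have hl1 : l1norm w = s * S := by
    rw [l1norm, mul_sum]
    refine sum_congr rfl fun i _ => ?_
    rw [hw i, abs_of_nonneg (mul_nonneg (mul_nonneg hs.le (hμ0 i)) (hm.le.trans (hu i))), mul_assoc]
  have hcomp : ∀ i, |((l1norm w)⁻¹ • w - μ) i| = μ i * |u i - S| / S := by
    intro i
    rw [hl1, Pi.sub_apply, Pi.smul_apply, smul_eq_mul, hw i,
      show (s * S)⁻¹ * (s * μ i * u i) - μ i = μ i * (u i - S) / S by field_simp,
      abs_div, abs_mul, abs_of_nonneg (hμ0 i), abs_of_pos hS]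
  calc l1norm ((l1norm w)⁻¹ • w - μ) = (∑ i, μ i * |u i - S|) / S := by
        rw [l1norm, sum_div]
        exact sum_congr rfl fun i _ => hcomp i
    _ ≤ D / S := div_le_div_of_nonneg_right hsum hS.le
    _ ≤ D / m := div_le_div_of_nonneg_left
        ((sum_nonneg fun i _ => mul_nonneg (hμ0 i) (abs_nonneg _)).trans hsum) hm hmS

lemma l1norm_normalize_vecMul_pow_succ_sub_le {k : ℕ} {M : Matrix (Fin k) (Fin k) ℝ}
    {μ v : Fin k → ℝ} {r a b : ℝ} (ha : 0 < a) (hM : ∀ i j, M i j ∈ Set.Icc a b)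
    (hμ0 : ∀ i, 0 < μ i) (hμ1 : ∑ i, μ i = 1) (hr : 0 < r) (heig : vecMul μ M = r • μ)
    (hv0 : ∀ i, 0 ≤ v i) (hv1 : ∑ i, v i = 1) (R : ℕ) :
    l1norm ((l1norm (vecMul v (M ^ (R + 1))))⁻¹ • vecMul v (M ^ (R + 1)) - μ) ≤
      (1 - a ^ 2 / (k * b ^ 2)) ^ (R + 1) * (k * b / a) / (a ^ 2 / (k * b ^ 2)) := by
  have hk : 0 < k := Nat.pos_of_ne_zero (by rintro rfl; simp at hμ1)
  have hb : 0 < b := ha.trans_le ((hM ⟨0, hk⟩ ⟨0, hk⟩).1.trans (hM _ _).2)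
  have hγ : 0 < a ^ 2 / (k * b ^ 2) := by positivity
  have hP : ∀ i j, a ^ 2 / (k * b ^ 2) ≤ doobTransform M μ r i j := by
    simpa using le_doobTransform_apply ha.le hM hμ0 hμ1 hr heig
  have hP1 := sum_doobTransform_apply (fun i => (hμ0 i).ne') hr.ne' heig
  have hμmin : ∀ i, a / (k * b) ≤ μ i := by
    simpa using div_le_apply_of_vecMul_eq_smul ha.le hM (fun i => (hμ0 i).le) hμ1 hr heig
  have hμ_le_one : ∀ i, μ i ≤ 1 := fun i =>
    hμ1 ▸ single_le_sum (fun j _ => (hμ0 j).le) (mem_univ i)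
  have ht0 : ∀ j, 0 ≤ v j / μ j := fun j => div_nonneg (hv0 j) (hμ0 j).le
  have ht1 : 1 ≤ ∑ j, v j / μ j :=
    hv1 ▸ sum_le_sum fun j _ => le_div_self (hv0 j) (hμ0 j) (hμ_le_one j)
  have htD : ∀ i j, v i / μ i - v j / μ j ≤ k * b / a := by
    intro i j
    have hvi : v i ≤ 1 := hv1 ▸ single_le_sum (fun j _ => hv0 j) (mem_univ i)
    have : v i / μ i ≤ 1 / (a / (k * b)) :=
      div_le_div₀ zero_le_one hvi (by positivity) (hμmin i)
    rw [one_div_div] at this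
    linarith [ht0 j]
  refine l1norm_inv_smul_sub_le (fun i => (hμ0 i).le) hμ1 (pow_pos hr _) hγ
    (fun i => ?_) (pow_mulVec_sub_pow_mulVec_le hγ.le hP hP1 htD (R + 1))
    (vecMul_pow_eq_doobTransform (fun i => (hμ0 i).ne') hr.ne' v (R + 1))
  calc a ^ 2 / (k * b ^ 2) ≤ a ^ 2 / (k * b ^ 2) * ∑ j, v j / μ j :=
        le_mul_of_one_le_right hγ.le ht1
    _ ≤ _ := mul_sum_le_pow_succ_mulVec hγ.le hP hP1 ht0 R i

theorem uniform_perron_projection_general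
    {k : ℕ} (hk : 0 < k) (η T : ℝ) (hη : 0 < η) (hηT : η < T)
    (δ : ℝ) (hδ : 0 < δ) :
    ∃ R₀ : ℕ, ∀ R : ℕ, R₀ ≤ R →
      ∀ κ : Matrix (Fin k) (Fin k) ℝ, (∀ i j, κ i j ∈ Set.Icc η T) →
      ∀ π : Fin k → ℝ, (∀ i, η ≤ π i) → (∀ i, 0 ≤ π i) → ∑ i, π i ≤ 1 →
      ∀ v : Fin k → ℝ, (∀ i, 0 ≤ v i) → ∑ i, v i = 1 →
      ∀ μ : Fin k → ℝ, (∀ i, 0 < μ i) → l1norm μ = 1 →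
        (∃ r : ℝ, 0 < r ∧ Matrix.vecMul μ (circ κ π) = r • μ) →
      l1norm ((l1norm (Matrix.vecMul v ((circ κ π) ^ R)))⁻¹ •
          Matrix.vecMul v ((circ κ π) ^ R) - μ) < δ := by
  have hT : 0 < T := hη.trans hηT
  set γ : ℝ := (η * η) ^ 2 / (k * T ^ 2)
  set C : ℝ := k * T / (η * η)
  have hγ : 0 < γ := by positivity
  have hC : 0 < C := by positivity
  obtain ⟨N, hN⟩ := exists_pow_lt_of_lt_one (div_pos (mul_pos hδ hγ) hC) (sub_lt_self 1 hγ)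
  refine ⟨N + 1, fun R hR κ hκ π hπη hπ0 hπ1 v hv0 hv1 μ hμ0 hμl1 ⟨r, hr, heig⟩ => ?_⟩
  obtain ⟨R, rfl⟩ : ∃ R', R = R' + 1 := ⟨R - 1, by omega⟩
  have hμ1 : ∑ i, μ i = 1 := by simpa [l1norm, abs_of_pos (hμ0 _)] using hμl1
  have hπ : ∀ j, π j ∈ Set.Icc η 1 := fun j =>
    ⟨hπη j, (single_le_sum (fun i _ => hπ0 i) (mem_univ j)).trans hπ1⟩
  have hM := circ_mem_Icc hη.le hη.le hκ hπ
  have hγ1 : γ ≤ 1 := by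
    have hηη : η * η ≤ T := (hM ⟨0, hk⟩ ⟨0, hk⟩).1.trans (hM _ _).2
    refine div_le_one_of_le₀ ?_ (by positivity)
    calc (η * η) ^ 2 ≤ T ^ 2 := pow_le_pow_left₀ (by positivity) hηη 2
      _ ≤ k * T ^ 2 := le_mul_of_one_le_left (by positivity) (by exact_mod_cast hk)
  refine (l1norm_normalize_vecMul_pow_succ_sub_le (mul_pos hη hη) hM hμ0 hμ1 hr heig hv0 hv1
    R).trans_lt ?_
  calc (1 - γ) ^ (R + 1) * C / γ ≤ (1 - γ) ^ N * C / γ := by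
        gcongr ?_ * _ / _
        exact pow_le_pow_of_le_one (sub_nonneg.2 hγ1) (sub_le_self 1 hγ.le) (by omega)
    _ < δ := by rwa [div_lt_iff₀ hγ, ← lt_div_iff₀ hC]

/-- Lemma 7.4 (unifPerronproj): uniform convergence of the direction of v(κ∘π)^R to
the principal left-eigenvector μ(κ∘π). -/
theorem uniform_perron_projection
    {k : ℕ} (hk : 0 < k) (η T : ℝ) (hη : 0 < η) (hη1 : η ≤ 1) (hηT : η < T)
    (δ : ℝ) (hδ : 0 < δ) :
    ∃ R₀ : ℕ, ∀ R : ℕ, R₀ ≤ R →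
      ∀ κ : Matrix (Fin k) (Fin k) ℝ, (∀ i j, κ i j ∈ Set.Icc η T) →
      ∀ π : Fin k → ℝ, (∀ i, η ≤ π i) → (∀ i, 0 ≤ π i) → ∑ i, π i ≤ 1 →
      ∀ v : Fin k → ℝ, (∀ i, 0 ≤ v i) → ∑ i, v i = 1 →
      ∀ μ : Fin k → ℝ, (∀ i, 0 < μ i) → l1norm μ = 1 →
        (∃ r : ℝ, 0 < r ∧ Matrix.vecMul μ (circ κ π) = r • μ) →
      l1norm ((l1norm (Matrix.vecMul v ((circ κ π) ^ R)))⁻¹ •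
          Matrix.vecMul v ((circ κ π) ^ R) - μ) < δ :=
  uniform_perron_projection_general hk η T hη hηT δ hδ
end

section
/- Fix real numbers 0 < η < T < ∞. For every δ > 0 there exists R₀ ∈ ℕ such that for every integer R ≥ R₀, every symmetric k×k real matrix A with all entries in [η,T], every real number r > 0 and every vector μ̄ ∈ ℝ^k with strictly positive entries, ‖μ̄‖₂ = 1 and μ̄A = rμ̄, and every v ∈ Π_{≤1}: ‖ vA^R / r^R − ⟨v,μ̄⟩·μ̄ ‖₁ < δ. -/
open Matrix

/-! Subtracting `η μμᵀ` from `A` leaves a nonnegative symmetric matrix `B` with positive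
eigenvector `μ` for the eigenvalue `r - η`; `B` acts like `A` on `μᗮ`, which `A` preserves.
By the Schur test the operator norm of `B` is at most `r - η`. Since `r ≤ kT`, each application
of `A / r` therefore shrinks the component of `v` orthogonal to `μ` by the factor `1 - η / (kT)`,
uniformly in `A`, `μ` and `v`, while the component along `μ` is fixed. -/

open Finset

namespace Matrix

theorem schur_test {m n : Type*} [Fintype m] [Fintype n] {B : Matrix m n ℝ}
    (hB : ∀ i j, 0 ≤ B i j) {μ : m → ℝ} {ν : n → ℝ} (hμ : ∀ i, 0 < μ i) {α β : ℝ}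
    (hα : 0 ≤ α) (hrow : μ ᵥ* B ≤ α • ν) (hcol : B *ᵥ ν ≤ β • μ) (u : m → ℝ) :
    u ᵥ* B ⬝ᵥ u ᵥ* B ≤ α * β * (u ⬝ᵥ u) := by
  set X : n → ℝ := fun j => ∑ i, B i j * (u i ^ 2 / μ i)
  have hX : ∀ j, 0 ≤ X j := fun j =>
    sum_nonneg fun i _ => mul_nonneg (hB i j) (div_nonneg (sq_nonneg _) (hμ i).le)
  -- Cauchy–Schwarz for `∑ i, u i * B i j`, split as `√(μ i B i j) * √(B i j u i ^ 2 / μ i)`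
  have hcauchy : ∀ j, (u ᵥ* B) j ^ 2 ≤ (μ ᵥ* B) j * X j := fun j =>
    sum_sq_le_sum_mul_sum_of_sq_le_mul _ (fun i _ => mul_nonneg (hμ i).le (hB i j))
      (fun i _ => mul_nonneg (hB i j) (div_nonneg (sq_nonneg _) (hμ i).le))
      (fun i _ => le_of_eq (by field_simp [(hμ i).ne']))
  calc u ᵥ* B ⬝ᵥ u ᵥ* B = ∑ j, (u ᵥ* B) j ^ 2 := by simp only [dotProduct, sq]
    _ ≤ ∑ j, α * (ν j * X j) := sum_le_sum fun j _ => (hcauchy j).trans <| by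
        simpa [mul_assoc] using mul_le_mul_of_nonneg_right (hrow j) (hX j)
    _ = α * ∑ i, u i ^ 2 / μ i * (B *ᵥ ν) i := by
        simp only [X, mulVec, dotProduct, mul_sum]
        rw [sum_comm]
        exact sum_congr rfl fun i _ => sum_congr rfl fun j _ => by ring
    _ ≤ α * ∑ i, u i ^ 2 / μ i * (β * μ i) := by
        gcongr with i
        · exact div_nonneg (sq_nonneg _) (hμ i).le
        · exact hcol i
    _ = α * β * (u ⬝ᵥ u) := by
        simp only [dotProduct, mul_sum, mul_assoc]
        exact sum_congr rfl fun i _ => by field_simp [(hμ i).ne']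

variable {n : Type*} [Fintype n]

theorem vecMul_dotProduct_eq_zero_of_isSymm {R : Type*} [CommSemiring R] {A : Matrix n n R}
    (hA : A.IsSymm) {μ : n → R} {r : R} (heig : μ ᵥ* A = r • μ) {u : n → R}
    (hu : u ⬝ᵥ μ = 0) : u ᵥ* A ⬝ᵥ μ = 0 := by
  rw [← dotProduct_mulVec, ← vecMul_transpose, hA.eq, heig, dotProduct_smul, hu, smul_zero]

theorem dotProduct_self_vecMul_le_of_orthogonal {A : Matrix n n ℝ} (hA : A.IsSymm) {η r : ℝ}
    (hη : 0 ≤ η) (hηr : η ≤ r) (hAη : ∀ i j, η ≤ A i j) {μ : n → ℝ} (hμ : ∀ i, 0 < μ i)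
    (hμμ : μ ⬝ᵥ μ = 1) (heig : μ ᵥ* A = r • μ) {u : n → ℝ} (hu : u ⬝ᵥ μ = 0) :
    u ᵥ* A ⬝ᵥ u ᵥ* A ≤ (r - η) ^ 2 * (u ⬝ᵥ u) := by
  set B := A - η • vecMulVec μ μ
  have hμ1 : ∀ i, μ i ≤ 1 := fun i => by
    have : μ i ^ 2 ≤ μ ⬝ᵥ μ := by
      simpa [dotProduct, sq] using single_le_sum (fun j _ => mul_self_nonneg (μ j)) (mem_univ i)
    nlinarith [hμ i]
  have hB : ∀ i j, 0 ≤ B i j := fun i j => by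
    have := mul_le_one₀ (hμ1 i) (hμ j).le (hμ1 j)
    simp only [B, sub_apply, smul_apply, vecMulVec_apply, smul_eq_mul]
    nlinarith [hAη i j]
  have hBμ : μ ᵥ* B = (r - η) • μ := by
    rw [vecMul_sub, vecMul_smul, vecMul_vecMulVec, hμμ, heig, one_smul, sub_smul]
  have hBμ' : B *ᵥ μ = (r - η) • μ := by
    rw [← vecMul_transpose, (hA.sub (IsSymm.smul (transpose_vecMulVec μ μ) η)).eq, hBμ]
  have huB : u ᵥ* B = u ᵥ* A := by
    rw [vecMul_sub, vecMul_smul, vecMul_vecMulVec, hu, zero_smul, smul_zero, sub_zero]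
  rw [← huB, sq]
  exact schur_test hB hμ (sub_nonneg.2 hηr) hBμ.le hBμ'.le u

theorem dotProduct_self_vecMul_pow_le_of_orthogonal [DecidableEq n] {A : Matrix n n ℝ}
    (hA : A.IsSymm) {η r : ℝ} (hη : 0 ≤ η) (hηr : η ≤ r) (hAη : ∀ i j, η ≤ A i j)
    {μ : n → ℝ} (hμ : ∀ i, 0 < μ i) (hμμ : μ ⬝ᵥ μ = 1) (heig : μ ᵥ* A = r • μ)
    {u : n → ℝ} (hu : u ⬝ᵥ μ = 0) (N : ℕ) :
    u ᵥ* (A ^ N) ⬝ᵥ u ᵥ* (A ^ N) ≤ ((r - η) ^ 2) ^ N * (u ⬝ᵥ u) := by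
  induction N generalizing u with
  | zero => simp
  | succ N ih =>
    rw [pow_succ', ← vecMul_vecMul, pow_succ, mul_assoc]
    exact (ih (vecMul_dotProduct_eq_zero_of_isSymm hA heig hu)).trans <|
      mul_le_mul_of_nonneg_left
        (dotProduct_self_vecMul_le_of_orthogonal hA hη hηr hAη hμ hμμ heig hu) (by positivity)

theorem vecMul_pow_eq_self {R : Type*} [Semiring R] [DecidableEq n] {M : Matrix n n R}
    {μ : n → R} (h : μ ᵥ* M = μ) (N : ℕ) : μ ᵥ* (M ^ N) = μ := by
  induction N with
  | zero => simp
  | succ N ih => rw [pow_succ, ← vecMul_vecMul, ih, h]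

theorem le_card_mul_of_vecMul_eq_smul [Nonempty n] {A : Matrix n n ℝ} {T : ℝ}
    (hAT : ∀ i j, A i j ≤ T) {μ : n → ℝ} (hμ : ∀ i, 0 < μ i) {r : ℝ}
    (heig : μ ᵥ* A = r • μ) : r ≤ Fintype.card n * T := by
  have hμsum : 0 < ∑ i, μ i := sum_pos (fun i _ => hμ i) univ_nonempty
  refine le_of_mul_le_mul_right ?_ hμsum
  calc r * ∑ i, μ i = ∑ j, ∑ i, μ i * A i j := by
        rw [mul_sum]
        exact sum_congr rfl fun j _ => (congrFun heig j).symm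
    _ ≤ ∑ _j : n, ∑ i, μ i * T := by gcongr with j _ i; exacts [(hμ i).le, hAT i j]
    _ = Fintype.card n * T * ∑ i, μ i := by
        rw [← sum_mul, sum_const, card_univ, nsmul_eq_mul]; ring

end Matrix

section

variable {n : Type*} [Fintype n]

theorem sub_smul_dotProduct_eq_zero {μ : n → ℝ} (hμμ : μ ⬝ᵥ μ = 1) (v : n → ℝ) :
    (v - (v ⬝ᵥ μ) • μ) ⬝ᵥ μ = 0 := by
  rw [sub_dotProduct, smul_dotProduct, hμμ, smul_eq_mul, mul_one, sub_self]

theorem dotProduct_sub_smul_self_le {μ : n → ℝ} (hμμ : μ ⬝ᵥ μ = 1) (v : n → ℝ) :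
    (v - (v ⬝ᵥ μ) • μ) ⬝ᵥ (v - (v ⬝ᵥ μ) • μ) ≤ v ⬝ᵥ v := by
  simp only [sub_dotProduct, dotProduct_sub, smul_dotProduct, dotProduct_smul, smul_eq_mul,
    hμμ, dotProduct_comm μ v]
  nlinarith [sq_nonneg (v ⬝ᵥ μ)]

theorem dotProduct_self_le_sq_sum {v : n → ℝ} (hv : ∀ i, 0 ≤ v i) :
    v ⬝ᵥ v ≤ (∑ i, v i) ^ 2 := by
  simpa [dotProduct, ← sq] using sum_sq_le_sq_sum_of_nonneg fun i _ => hv i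

theorem dotProduct_self_normalized_pow_sub_proj_le [DecidableEq n] {A : Matrix n n ℝ}
    (hA : A.IsSymm) {ε r : ℝ} (hε0 : 0 ≤ ε) (hε1 : ε ≤ 1) (hr : 0 < r)
    (hAε : ∀ i j, ε * r ≤ A i j) {μ : n → ℝ} (hμ : ∀ i, 0 < μ i) (hμμ : μ ⬝ᵥ μ = 1)
    (heig : μ ᵥ* A = r • μ) (v : n → ℝ) (N : ℕ) :
    ((r ^ N)⁻¹ • v ᵥ* (A ^ N) - (v ⬝ᵥ μ) • μ) ⬝ᵥ ((r ^ N)⁻¹ • v ᵥ* (A ^ N) - (v ⬝ᵥ μ) • μ)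
      ≤ ((1 - ε) ^ 2) ^ N * (v ⬝ᵥ v) := by
  have heig' : μ ᵥ* (r⁻¹ • A) = (1 : ℝ) • μ := by
    rw [vecMul_smul, heig, smul_smul, inv_mul_cancel₀ hr.ne']
  have hεA : ∀ i j, ε ≤ (r⁻¹ • A) i j := fun i j => by
    rw [Matrix.smul_apply, smul_eq_mul, le_inv_mul_iff₀ hr, mul_comm]
    exact hAε i j
  have hnormalize : (r ^ N)⁻¹ • v ᵥ* (A ^ N) - (v ⬝ᵥ μ) • μ =
      (v - (v ⬝ᵥ μ) • μ) ᵥ* ((r⁻¹ • A) ^ N) := by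
    rw [sub_vecMul, smul_vecMul, vecMul_pow_eq_self (heig'.trans (one_smul ℝ μ)), smul_pow,
      vecMul_smul, inv_pow]
  rw [hnormalize]
  refine (dotProduct_self_vecMul_pow_le_of_orthogonal (hA.smul r⁻¹) hε0 hε1 hεA hμ hμμ heig'
    (sub_smul_dotProduct_eq_zero hμμ v) N).trans ?_
  gcongr
  exact dotProduct_sub_smul_self_le hμμ v

end

theorem l1norm_sq_le_card_mul_dotProduct_self {k : ℕ} (t : Fin k → ℝ) :
    l1norm t ^ 2 ≤ k * (t ⬝ᵥ t) := by
  simpa [l1norm, dotProduct, ← sq, sq_abs] using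
    sq_sum_le_card_mul_sum_sq (s := univ) (f := fun i => |t i|)

theorem l1norm_sq_normalized_pow_sub_proj_le {k : ℕ} {A : Matrix (Fin k) (Fin k) ℝ}
    (hA : A.IsSymm) {ε r : ℝ} (hε0 : 0 ≤ ε) (hε1 : ε ≤ 1) (hr : 0 < r)
    (hAε : ∀ i j, ε * r ≤ A i j) {μ : Fin k → ℝ} (hμ : ∀ i, 0 < μ i) (hμμ : μ ⬝ᵥ μ = 1)
    (heig : μ ᵥ* A = r • μ) {v : Fin k → ℝ} (hv : ∀ i, 0 ≤ v i) (hv1 : ∑ i, v i ≤ 1) (N : ℕ) :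
    l1norm ((r ^ N)⁻¹ • v ᵥ* (A ^ N) - (v ⬝ᵥ μ) • μ) ^ 2 ≤ k * ((1 - ε) ^ 2) ^ N := by
  have hvv : v ⬝ᵥ v ≤ 1 :=
    (dotProduct_self_le_sq_sum hv).trans (pow_le_one₀ (sum_nonneg fun i _ => hv i) hv1)
  refine (l1norm_sq_le_card_mul_dotProduct_self _).trans
    (mul_le_mul_of_nonneg_left ?_ k.cast_nonneg)
  exact (dotProduct_self_normalized_pow_sub_proj_le hA hε0 hε1 hr hAε hμ hμμ heig v N).trans
    (mul_le_of_le_one_right (by positivity) hvv)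

/-- Lemma 7.3 (realsymlimit): for symmetric matrices with entries in [η,T], the
normalised powers vA^R/r^R converge uniformly to the Perron projection ⟨v,μ̄⟩μ̄. -/
theorem symmetric_perron_projection
    {k : ℕ} (hk : 0 < k) (η T : ℝ) (hη : 0 < η) (hηT : η < T)
    (δ : ℝ) (hδ : 0 < δ) :
    ∃ R₀ : ℕ, ∀ R : ℕ, R₀ ≤ R →
      ∀ A : Matrix (Fin k) (Fin k) ℝ, A.IsSymm → (∀ i j, A i j ∈ Set.Icc η T) →
      ∀ (r : ℝ) (μbar : Fin k → ℝ), 0 < r → (∀ i, 0 < μbar i) →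
        Real.sqrt (∑ i, μbar i ^ 2) = 1 → Matrix.vecMul μbar A = r • μbar →
      ∀ v : Fin k → ℝ, (∀ i, 0 ≤ v i) → ∑ i, v i ≤ 1 →
      l1norm ((r ^ R)⁻¹ • Matrix.vecMul v (A ^ R) - (∑ i, v i * μbar i) • μbar) < δ := by
  have : Nonempty (Fin k) := ⟨⟨0, hk⟩⟩
  have hk' : (0 : ℝ) < k := Nat.cast_pos.2 hk
  have hkT : 0 < (k : ℝ) * T := mul_pos hk' (hη.trans hηT)
  set ε := η / (k * T)
  have hε0 : 0 < ε := div_pos hη hkT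
  have hε1 : ε < 1 := (div_lt_one hkT).2 <|
    hηT.trans_le (le_mul_of_one_le_left (hη.trans hηT).le (by exact_mod_cast hk))
  have hρ1 : (1 - ε) ^ 2 < 1 := pow_lt_one₀ (sub_nonneg.2 hε1.le) (sub_lt_self 1 hε0) two_ne_zero
  obtain ⟨R₀, hR₀⟩ := exists_pow_lt_of_lt_one (div_pos (pow_pos hδ 2) hk') hρ1
  refine ⟨R₀, fun R hR A hA hAηT r μ hr hμ hμnorm heig v hv hv1 => ?_⟩
  have hμμ : μ ⬝ᵥ μ = 1 := by simpa [dotProduct, sq] using hμnorm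
  have hrkT : r ≤ k * T := by
    simpa using le_card_mul_of_vecMul_eq_smul (fun i j => (hAηT i j).2) hμ heig
  have hεA : ∀ i j, ε * r ≤ A i j := fun i j => calc
    ε * r ≤ ε * (k * T) := by gcongr
    _ = η := div_mul_cancel₀ η hkT.ne'
    _ ≤ A i j := (hAηT i j).1
  refine lt_of_pow_lt_pow_left₀ 2 hδ.le ?_
  calc _ ≤ k * ((1 - ε) ^ 2) ^ R :=
        l1norm_sq_normalized_pow_sub_proj_le hA hε0.le hε1.le hr hεA hμ hμμ heig hv hv1 R
    _ ≤ k * ((1 - ε) ^ 2) ^ R₀ :=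
        mul_le_mul_of_nonneg_left (pow_le_pow_of_le_one (sq_nonneg _) hρ1.le hR) hk'.le
    _ < δ ^ 2 := (lt_div_iff₀' hk').1 hR₀
end

section
/- For all real numbers 0 < Λ̄ < Λ and K < ∞ there exist an integer M ≥ 1, vectors π^{(1)},…,π^{(M)} ∈ Π_{≤1}, and kernels κ^{(1)},…,κ^{(M)} (symmetric k×k matrices with nonnegative entries) such that: ρ(κ^{(m)}∘π^{(m)}) = Λ̄ for each m ∈ [M]; and for every π ∈ Π_{≤1} and every kernel κ with all entries in [0,K] satisfying ρ(κ∘π) ≥ Λ, there exists m ∈ [M] with π^{(m)}_i ≤ π_i for all i ∈ [k] and κ^{(m)}_{i,j} ≤ κ_{i,j} for all i,j ∈ [k]. -/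
/-
Round `π` and `κ` down to the grid `δℕ`. The matrix `κ ∘ π = κ · diag π` has the same nonzero
spectrum as the symmetric matrix `diag √π · κ · diag √π`, whose entries drop by at most
`δ + 2K√δ` under rounding. The Perron root of a nonnegative matrix is monotone in its entries,
and on symmetric matrices it is the ℓ² operator norm, hence subadditive; so rounding lowers the
Perron root by at most `k (δ + 2K√δ)`, which is below `Λ - Λbar` for small `δ`. Only finitely
many rounded pairs occur, and scaling the kernel of each one down to Perron root exactly `Λbar`
gives the family.
-/

open Matrix

/-- `π ∈ Π_{≤1}`: a subdistribution on `[k]`. -/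
def IsSubdist {k : ℕ} (π : Fin k → ℝ) : Prop :=
  (∀ i, 0 ≤ π i) ∧ ∑ i, π i ≤ 1

section Rounding

noncomputable def roundDown (δ x : ℝ) : ℝ := ⌊x / δ⌋₊ * δ

variable {δ x : ℝ}

theorem roundDown_nonneg (hδ : 0 ≤ δ) : 0 ≤ roundDown δ x := by
  unfold roundDown; positivity

theorem roundDown_le (hδ : 0 < δ) (hx : 0 ≤ x) : roundDown δ x ≤ x :=
  (le_div_iff₀ hδ).mp (Nat.floor_le (div_nonneg hx hδ.le))

theorem lt_roundDown_add (hδ : 0 < δ) (x : ℝ) : x < roundDown δ x + δ := by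
  have := (div_lt_iff₀ hδ).mp (Nat.lt_floor_add_one (x / δ))
  unfold roundDown; linarith

theorem roundDown_mem_image_Iic (hδ : 0 < δ) {B : ℝ} (hx : x ≤ B) :
    roundDown δ x ∈ (fun n : ℕ => (n : ℝ) * δ) '' Set.Iic ⌊B / δ⌋₊ :=
  ⟨_, Nat.floor_le_floor (div_le_div_of_nonneg_right hx hδ.le), rfl⟩

theorem sqrt_sub_sqrt_roundDown_le (hδ : 0 < δ) (x : ℝ) :
    √x - √(roundDown δ x) ≤ √δ := by
  have h0 := roundDown_nonneg (x := x) hδ.le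
  have hle : √x ≤ √(roundDown δ x) + √δ := by
    rw [← Real.sqrt_sq (by positivity : 0 ≤ √(roundDown δ x) + √δ)]
    refine Real.sqrt_le_sqrt ?_
    nlinarith [Real.sq_sqrt h0, Real.sq_sqrt hδ.le, lt_roundDown_add hδ x,
      mul_nonneg (Real.sqrt_nonneg (roundDown δ x)) (Real.sqrt_nonneg δ)]
  linarith

theorem sqrt_mul_mul_sqrt_le_roundDown (hδ : 0 < δ) {y a K : ℝ} (hx : x ∈ Set.Icc (0 : ℝ) 1)
    (hy : y ∈ Set.Icc (0 : ℝ) 1) (ha : a ∈ Set.Icc 0 K) :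
    √x * a * √y ≤
      √(roundDown δ x) * roundDown δ a * √(roundDown δ y) + (δ + 2 * K * √δ) := by
  set u := √x
  set w := √y
  set u' := √(roundDown δ x)
  set w' := √(roundDown δ y)
  have hu' : 0 ≤ u' := Real.sqrt_nonneg _
  have hw' : 0 ≤ w' := Real.sqrt_nonneg _
  have hu'u : u' ≤ u := Real.sqrt_le_sqrt (roundDown_le hδ hx.1)
  have hw'w : w' ≤ w := Real.sqrt_le_sqrt (roundDown_le hδ hy.1)
  have hu1 : u ≤ 1 := Real.sqrt_le_one.mpr hx.2
  have hw1 : w ≤ 1 := Real.sqrt_le_one.mpr hy.2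
  have hu'w' : u' * w' ≤ 1 := mul_le_one₀ (hu'u.trans hu1) hw' (hw'w.trans hw1)
  have hprod0 : 0 ≤ u * w - u' * w' := by nlinarith
  -- `u w - u' w' = u (w - w') + w' (u - u')`, and each difference is at most `√δ`
  have hprod : u * w - u' * w' ≤ 2 * √δ := by
    nlinarith [sqrt_sub_sqrt_roundDown_le hδ x, sqrt_sub_sqrt_roundDown_le hδ y]
  have hsqrt : a * (u * w - u' * w') ≤ K * (2 * √δ) :=
    mul_le_mul ha.2 hprod hprod0 (ha.1.trans ha.2)
  have hkernel : (a - roundDown δ a) * (u' * w') ≤ δ * 1 :=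
    mul_le_mul (by linarith [lt_roundDown_add hδ a]) hu'w' (by positivity) hδ.le
  linarith

end Rounding

open scoped Pointwise ENNReal NNReal

theorem spectrum.spectralRadius_mul_comm {𝕜 A : Type*} [NormedField 𝕜] [Ring A] [Algebra 𝕜 A]
    (a b : A) : spectralRadius 𝕜 (a * b) = spectralRadius 𝕜 (b * a) := by
  suffices h : ∀ a b : A, spectralRadius 𝕜 (a * b) ≤ spectralRadius 𝕜 (b * a) from
    le_antisymm (h a b) (h b a)
  intro a b
  refine iSup₂_le fun z hz => ?_
  rcases eq_or_ne z 0 with rfl | hz0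
  · simp
  · have hz' : z ∈ spectrum 𝕜 (b * a) \ {0} := nonzero_mul_comm (𝕜 := 𝕜) a b ▸ ⟨hz, hz0⟩
    exact le_iSup₂ (f := fun z (_ : z ∈ spectrum 𝕜 (b * a)) => (‖z‖₊ : ℝ≥0∞)) z hz'.1

theorem Matrix.pow_apply_le_pow_apply {n α : Type*} [Fintype n] [DecidableEq n] [Semiring α]
    [PartialOrder α] [IsOrderedRing α] {A B : Matrix n n α} (hA : ∀ i j, 0 ≤ A i j)
    (hAB : ∀ i j, A i j ≤ B i j) (m : ℕ) (i j : n) : (A ^ m) i j ≤ (B ^ m) i j := by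
  induction m generalizing j with
  | zero => rfl
  | succ m ih =>
    rw [pow_succ, pow_succ, mul_apply, mul_apply]
    exact Finset.sum_le_sum fun l _ => mul_le_mul (ih l) (hAB l j) (hA l j)
      ((pow_apply_nonneg hA m i l).trans (ih l))

variable {k : ℕ}

/- `spectralRadius` involves no norm on the algebra: the operator norms below only make the
matrices a Banach algebra, ℓ∞ for entrywise estimates and ℓ² for the C⋆-identity. -/
section LinftyNorm

attribute [local instance] Matrix.linftyOpNormedAddCommGroup Matrix.linftyOpNormedRing
  Matrix.linftyOpNormedAlgebra

theorem perronRoot_eq_toReal_spectralRadius [NeZero k] (A : Matrix (Fin k) (Fin k) ℝ) :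
    perronRoot A = (spectralRadius ℂ (Complex.ofRealHom.mapMatrix A)).toReal := by
  obtain ⟨z, hz, hzr⟩ := spectrum.exists_nnnorm_eq_spectralRadius (Complex.ofRealHom.mapMatrix A)
  rw [← hzr, ENNReal.coe_toReal, coe_nnnorm]
  refine IsGreatest.csSup_eq ⟨⟨z, hz, rfl⟩, ?_⟩
  rintro _ ⟨w, hw, rfl⟩
  have : (‖w‖₊ : ℝ≥0∞) ≤ ‖z‖₊ :=
    hzr ▸ le_iSup₂ (f := fun w (_ : w ∈ spectrum ℂ _) => (‖w‖₊ : ℝ≥0∞)) w hw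
  exact_mod_cast this

theorem perronRoot_smul [NeZero k] {c : ℝ} (hc : 0 ≤ c) (A : Matrix (Fin k) (Fin k) ℝ) :
    perronRoot (c • A) = c * perronRoot A := by
  have hmap : (c • A).map Complex.ofReal = (c : ℂ) • A.map Complex.ofReal := by
    ext i j; simp
  have hnorm : (fun z : ℂ => ‖z‖) '' ((c : ℂ) • spectrum ℂ (A.map Complex.ofReal)) =
      c • ((fun z : ℂ => ‖z‖) '' spectrum ℂ (A.map Complex.ofReal)) := by
    simp only [← Set.image_smul, Set.image_image, smul_eq_mul, norm_mul, Complex.norm_real,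
      Real.norm_eq_abs, abs_of_nonneg hc]
  rw [perronRoot, hmap, spectrum.smul_eq_smul _ _ (spectrum.nonempty _), hnorm,
    Real.sSup_smul_of_nonneg hc, smul_eq_mul, perronRoot]

theorem perronRoot_mono [NeZero k] {A B : Matrix (Fin k) (Fin k) ℝ} (hA : ∀ i j, 0 ≤ A i j)
    (hAB : ∀ i j, A i j ≤ B i j) : perronRoot A ≤ perronRoot B := by
  set f := Complex.ofRealHom.mapMatrix (m := Fin k)
  rw [perronRoot_eq_toReal_spectralRadius, perronRoot_eq_toReal_spectralRadius]
  refine ENNReal.toReal_mono ((spectrum.spectralRadius_le_nnnorm (f B)).trans_lt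
    ENNReal.coe_lt_top).ne ?_
  have hnorm (n : ℕ) : ‖f A ^ n‖₊ ≤ ‖f B ^ n‖₊ := by
    rw [← map_pow, ← map_pow, linfty_opNNNorm_def, linfty_opNNNorm_def]
    gcongr with i _ j _
    simp only [f, RingHom.mapMatrix_apply, map_apply, Complex.ofRealHom_eq_coe,
      Complex.nnnorm_real]
    rw [← Real.toNNReal_eq_nnnorm_of_nonneg (pow_apply_nonneg hA n i j),
      ← Real.toNNReal_eq_nnnorm_of_nonneg ((pow_apply_nonneg hA n i j).trans
        (pow_apply_le_pow_apply hA hAB n i j))]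
    exact Real.toNNReal_le_toNNReal (pow_apply_le_pow_apply hA hAB n i j)
  calc spectralRadius ℂ (f A)
      ≤ Filter.atTop.liminf fun n : ℕ => (‖f A ^ n‖₊ : ℝ≥0∞) ^ (1 / n : ℝ) :=
        spectrum.spectralRadius_le_liminf_pow_nnnorm_pow_one_div ℂ (f A)
    _ ≤ Filter.atTop.liminf fun n : ℕ => (‖f B ^ n‖₊ : ℝ≥0∞) ^ (1 / n : ℝ) :=
        Filter.liminf_le_liminf (.of_forall fun n => by gcongr; exact hnorm n)
    _ = spectralRadius ℂ (f B) :=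
        (spectrum.pow_nnnorm_pow_one_div_tendsto_nhds_spectralRadius (f B)).liminf_eq

theorem perronRoot_le_card_mul [NeZero k] {A : Matrix (Fin k) (Fin k) ℝ} {c : ℝ}
    (hA : ∀ i j, |A i j| ≤ c) : perronRoot A ≤ k * c := by
  rw [perronRoot_eq_toReal_spectralRadius]
  have hc : 0 ≤ c := (abs_nonneg _).trans (hA 0 0)
  calc (spectralRadius ℂ (Complex.ofRealHom.mapMatrix A)).toReal
      ≤ ‖Complex.ofRealHom.mapMatrix A‖ := by
        simpa using ENNReal.toReal_mono ENNReal.coe_ne_top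
          (spectrum.spectralRadius_le_nnnorm (𝕜 := ℂ) (Complex.ofRealHom.mapMatrix A))
    _ ≤ k * c := by
        have hkc : (0 : ℝ) ≤ k * c := by positivity
        rw [linfty_opNorm_def, ← Real.coe_toNNReal _ hkc, NNReal.coe_le_coe]
        refine Finset.sup_le fun i _ => ?_
        rw [← NNReal.coe_le_coe, Real.coe_toNNReal _ hkc, NNReal.coe_sum]
        calc ∑ j, (‖Complex.ofRealHom.mapMatrix A i j‖₊ : ℝ) = ∑ j, |A i j| := by simp
          _ ≤ ∑ _j : Fin k, c := Finset.sum_le_sum fun j _ => hA i j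
          _ = k * c := by simp

end LinftyNorm

section L2Norm

open scoped Matrix.Norms.L2Operator

theorem perronRoot_add_le_of_isSymm [NeZero k] {S T : Matrix (Fin k) (Fin k) ℝ}
    (hS : S.IsSymm) (hT : T.IsSymm) :
    perronRoot (S + T) ≤ perronRoot S + perronRoot T := by
  have hsa {S : Matrix (Fin k) (Fin k) ℝ} (hS : S.IsSymm) :
      IsSelfAdjoint (Complex.ofRealHom.mapMatrix S) := by
    show (Complex.ofRealHom.mapMatrix S)ᴴ = Complex.ofRealHom.mapMatrix S
    ext i j
    simp [hS.apply i j]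
  rw [perronRoot_eq_toReal_spectralRadius, perronRoot_eq_toReal_spectralRadius,
    perronRoot_eq_toReal_spectralRadius, (hsa hS).spectralRadius_eq_nnnorm,
    (hsa hT).spectralRadius_eq_nnnorm, (hsa (hS.add hT)).spectralRadius_eq_nnnorm, map_add]
  simpa only [ENNReal.coe_toReal, coe_nnnorm] using norm_add_le _ _

end L2Norm

theorem perronRoot_mul_comm [NeZero k] (A B : Matrix (Fin k) (Fin k) ℝ) :
    perronRoot (A * B) = perronRoot (B * A) := by
  rw [perronRoot_eq_toReal_spectralRadius, perronRoot_eq_toReal_spectralRadius, map_mul, map_mul,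
    spectrum.spectralRadius_mul_comm]

theorem perronRoot_one [NeZero k] : perronRoot (1 : Matrix (Fin k) (Fin k) ℝ) = 1 := by
  simp [perronRoot]

section Symmetrize

variable {n : Type*} [Fintype n] [DecidableEq n]

noncomputable def symmetrized (A : Matrix n n ℝ) (v : n → ℝ) : Matrix n n ℝ :=
  diagonal (fun i => √(v i)) * A * diagonal (fun i => √(v i))

@[simp]
theorem symmetrized_apply (A : Matrix n n ℝ) (v : n → ℝ) (i j : n) :
    symmetrized A v i j = √(v i) * A i j * √(v j) := by
  simp [symmetrized, diagonal_mul, mul_diagonal]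

theorem Matrix.IsSymm.symmetrized {A : Matrix n n ℝ} (hA : A.IsSymm) (v : n → ℝ) :
    (symmetrized A v).IsSymm := by
  ext i j
  simp only [transpose_apply, symmetrized_apply, hA.apply i j]
  ring

end Symmetrize

theorem circ_eq_mul_diagonal (A : Matrix (Fin k) (Fin k) ℝ) (v : Fin k → ℝ) :
    circ A v = A * diagonal v := by
  ext i j; simp [circ]

theorem circ_smul (c : ℝ) (A : Matrix (Fin k) (Fin k) ℝ) (v : Fin k → ℝ) :
    circ (c • A) v = c • circ A v := by
  ext i j; simp [circ, mul_assoc]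

theorem perronRoot_circ_eq_symmetrized [NeZero k] (A : Matrix (Fin k) (Fin k) ℝ) {v : Fin k → ℝ}
    (hv : ∀ i, 0 ≤ v i) : perronRoot (circ A v) = perronRoot (symmetrized A v) := by
  have hsq : diagonal v = diagonal (fun i => √(v i)) * diagonal (fun i => √(v i)) := by
    simp [diagonal_mul_diagonal, Real.mul_self_sqrt (hv _)]
  rw [circ_eq_mul_diagonal, hsq, ← mul_assoc, perronRoot_mul_comm, symmetrized, mul_assoc]

theorem IsKernel.smul {κ : Matrix (Fin k) (Fin k) ℝ} (hκ : IsKernel κ) {c : ℝ} (hc : 0 ≤ c) :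
    IsKernel (c • κ) :=
  ⟨hκ.1.smul c, fun i j => mul_nonneg hc (hκ.2 i j)⟩

theorem IsSubdist.le_one {π : Fin k → ℝ} (hπ : IsSubdist π) (i : Fin k) : π i ≤ 1 :=
  (Finset.single_le_sum (fun j _ => hπ.1 j) (Finset.mem_univ i)).trans hπ.2

theorem IsSubdist.roundDown {π : Fin k → ℝ} (hπ : IsSubdist π) {δ : ℝ} (hδ : 0 < δ) :
    IsSubdist (roundDown δ ∘ π) :=
  ⟨fun _ => roundDown_nonneg hδ.le,
    (Finset.sum_le_sum fun i _ => roundDown_le hδ (hπ.1 i)).trans hπ.2⟩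

theorem IsKernel.map_roundDown {κ : Matrix (Fin k) (Fin k) ℝ} (hκ : IsKernel κ) {δ : ℝ}
    (hδ : 0 < δ) : IsKernel (κ.map (roundDown δ)) :=
  ⟨hκ.1.map _, fun _ _ => roundDown_nonneg hδ.le⟩

theorem perronRoot_circ_le_roundDown [NeZero k] {δ K : ℝ} (hδ : 0 < δ) {π : Fin k → ℝ}
    {κ : Matrix (Fin k) (Fin k) ℝ} (hπ : IsSubdist π) (hκ : IsKernel κ) (hκK : ∀ i j, κ i j ≤ K) :
    perronRoot (circ κ π) ≤
      perronRoot (circ (κ.map (roundDown δ)) (roundDown δ ∘ π)) + k * (δ + 2 * K * √δ) := by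
  set c := δ + 2 * K * √δ
  have hc : 0 ≤ c := by
    have : 0 ≤ K := (hκ.2 0 0).trans (hκK 0 0)
    positivity
  calc perronRoot (circ κ π)
      = perronRoot (symmetrized κ π) := perronRoot_circ_eq_symmetrized κ hπ.1
    _ ≤ perronRoot (symmetrized (κ.map (roundDown δ)) (roundDown δ ∘ π) + of fun _ _ => c) := by
        refine perronRoot_mono (fun i j => ?_) (fun i j => ?_)
        · have := hκ.2 i j
          simp only [symmetrized_apply]; positivity
        · simpa using sqrt_mul_mul_sqrt_le_roundDown hδ ⟨hπ.1 i, hπ.le_one i⟩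
            ⟨hπ.1 j, hπ.le_one j⟩ ⟨hκ.2 i j, hκK i j⟩
    _ ≤ perronRoot (symmetrized (κ.map (roundDown δ)) (roundDown δ ∘ π)) +
          perronRoot (of fun _ _ => c) :=
        perronRoot_add_le_of_isSymm ((hκ.1.map _).symmetrized _) (by ext; rfl)
    _ ≤ perronRoot (circ (κ.map (roundDown δ)) (roundDown δ ∘ π)) + k * c := by
        rw [perronRoot_circ_eq_symmetrized _ (hπ.roundDown hδ).1]
        gcongr
        exact perronRoot_le_card_mul fun _ _ => (abs_of_nonneg hc).le

theorem IsKernel.exists_le_perronRoot_circ_eq [NeZero k] {π : Fin k → ℝ}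
    {κ : Matrix (Fin k) (Fin k) ℝ} (hκ : IsKernel κ) {c : ℝ} (hc : 0 < c)
    (hcρ : c ≤ perronRoot (circ κ π)) :
    ∃ κ', IsKernel κ' ∧ (∀ i j, κ' i j ≤ κ i j) ∧ perronRoot (circ κ' π) = c := by
  have hρ : 0 < perronRoot (circ κ π) := hc.trans_le hcρ
  have hscale : 0 ≤ c / perronRoot (circ κ π) := by positivity
  refine ⟨(c / perronRoot (circ κ π)) • κ, hκ.smul hscale, fun i j => ?_, ?_⟩
  · exact mul_le_of_le_one_left (hκ.2 i j) ((div_le_one hρ).mpr hcρ)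
  · rw [circ_smul, perronRoot_smul hscale, div_mul_cancel₀ _ hρ.ne']

theorem exists_isSubdist_isKernel_perronRoot_circ_eq [NeZero k] {c : ℝ} (hc : 0 ≤ c) :
    ∃ (π : Fin k → ℝ) (κ : Matrix (Fin k) (Fin k) ℝ),
      IsSubdist π ∧ IsKernel κ ∧ perronRoot (circ κ π) = c := by
  refine ⟨fun _ => 1 / k, (k * c) • 1, ⟨fun _ => by positivity, by simp⟩,
    IsKernel.smul ⟨isSymm_one, fun i j => ?_⟩ (by positivity), ?_⟩
  · rw [one_apply]; split_ifs <;> norm_num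
  · rw [circ_smul, circ_eq_mul_diagonal, one_mul, ← smul_one_eq_diagonal,
      perronRoot_smul (by positivity), perronRoot_smul (by positivity), perronRoot_one,
      mul_one, mul_one_div, mul_div_cancel_left₀ _ (Nat.cast_ne_zero.mpr (NeZero.ne k))]

theorem exists_pos_mul_add_sqrt_le (c K : ℝ) {ε : ℝ} (hε : 0 < ε) :
    ∃ δ > 0, c * (δ + 2 * K * √δ) ≤ ε := by
  have hcont : Continuous fun δ : ℝ => c * (δ + 2 * K * √δ) := by fun_prop
  have hlim := (hcont.tendsto 0).mono_left (nhdsWithin_le_nhds (s := Set.Ioi 0))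
  simp only [Real.sqrt_zero, mul_zero, add_zero] at hlim
  obtain ⟨δ, hδε, hδ⟩ := ((hlim.eventually (ge_mem_nhds hε)).and self_mem_nhdsWithin).exists
  exact ⟨δ, hδ, hδε⟩

theorem exists_finite_minorising_set [NeZero k] {Λbar Λ : ℝ} (K : ℝ) (hΛ : Λbar < Λ) :
    ∃ F : Set ((Fin k → ℝ) × Matrix (Fin k) (Fin k) ℝ), F.Finite ∧
      (∀ p ∈ F, IsSubdist p.1 ∧ IsKernel p.2 ∧ Λbar ≤ perronRoot (circ p.2 p.1)) ∧
      ∀ π κ, IsSubdist π → IsKernel κ → (∀ i j, κ i j ≤ K) → Λ ≤ perronRoot (circ κ π) →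
        ∃ p ∈ F, (∀ i, p.1 i ≤ π i) ∧ ∀ i j, p.2 i j ≤ κ i j := by
  obtain ⟨δ, hδ, hδε⟩ := exists_pos_mul_add_sqrt_le k K (sub_pos.mpr hΛ)
  let grid (B : ℝ) : Set ℝ := (fun n : ℕ => (n : ℝ) * δ) '' Set.Iic ⌊B / δ⌋₊
  have hgrid (B : ℝ) : (grid B).Finite := (Set.finite_Iic _).image _
  refine ⟨{p | IsSubdist p.1 ∧ IsKernel p.2 ∧ Λbar ≤ perronRoot (circ p.2 p.1) ∧
      (∀ i, p.1 i ∈ grid 1) ∧ ∀ i j, p.2 i j ∈ grid K}, ?_,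
    fun p hp => ⟨hp.1, hp.2.1, hp.2.2.1⟩, fun π κ hπ hκ hκK hΛρ => ?_⟩
  · refine ((Set.Finite.pi' fun _ => hgrid 1).prod
      (Set.Finite.pi' fun _ => Set.Finite.pi' fun _ => hgrid K)).subset ?_
    exact fun p hp => ⟨hp.2.2.2.1, hp.2.2.2.2⟩
  · have hround := perronRoot_circ_le_roundDown hδ hπ hκ hκK
    refine ⟨(roundDown δ ∘ π, κ.map (roundDown δ)),
      ⟨hπ.roundDown hδ, hκ.map_roundDown hδ, by linarith,
        fun i => roundDown_mem_image_Iic hδ (hπ.le_one i),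
        fun i j => roundDown_mem_image_Iic hδ (hκK i j)⟩,
      fun i => roundDown_le hδ (hπ.1 i), fun i j => roundDown_le hδ (hκ.2 i j)⟩

/-- Lemma 5.2 (minorisation): any kernel-subdistribution pair with Perron root at least Λ
dominates one of finitely many pairs with Perron root exactly Λ̄. -/
theorem minorisation
    {k : ℕ} (hk : 0 < k) (Λbar Λ K : ℝ) (h0 : 0 < Λbar) (hΛ : Λbar < Λ) :
    ∃ (M : ℕ) (πs : Fin M → Fin k → ℝ) (κs : Fin M → Matrix (Fin k) (Fin k) ℝ),
      1 ≤ M ∧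
      (∀ m, IsSubdist (πs m)) ∧ (∀ m, IsKernel (κs m)) ∧
      (∀ m, perronRoot (circ (κs m) (πs m)) = Λbar) ∧
      (∀ (π : Fin k → ℝ) (κ : Matrix (Fin k) (Fin k) ℝ),
        IsSubdist π → IsKernel κ → (∀ i j, κ i j ≤ K) →
        Λ ≤ perronRoot (circ κ π) →
        ∃ m, (∀ i, πs m i ≤ π i) ∧ (∀ i j, κs m i j ≤ κ i j)) := by
  have : NeZero k := ⟨hk.ne'⟩
  obtain ⟨F, hF, hFgood, hFcover⟩ := exists_finite_minorising_set (k := k) K hΛ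
  choose! rescale hrescale using fun p (hp : p ∈ F) =>
    (hFgood p hp).2.1.exists_le_perronRoot_circ_eq h0 (hFgood p hp).2.2
  obtain ⟨π₀, κ₀, h₀⟩ := exists_isSubdist_isKernel_perronRoot_circ_eq (k := k) h0.le
  obtain ⟨M, f, -, hf⟩ := ((hF.image fun p => (p.1, rescale p)).insert (π₀, κ₀)).fin_param
  obtain ⟨m₀, -⟩ : (π₀, κ₀) ∈ Set.range f := hf ▸ Set.mem_insert _ _
  have hgood (m : Fin M) : IsSubdist (f m).1 ∧ IsKernel (f m).2 ∧
      perronRoot (circ (f m).2 (f m).1) = Λbar := by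
    obtain hm | ⟨p, hp, hm⟩ := hf ▸ Set.mem_range_self m
    · exact hm ▸ h₀
    · exact hm ▸ ⟨(hFgood p hp).1, (hrescale p hp).1, (hrescale p hp).2.2⟩
  refine ⟨M, fun m => (f m).1, fun m => (f m).2, m₀.pos, fun m => (hgood m).1,
    fun m => (hgood m).2.1, fun m => (hgood m).2.2, fun π κ hπ hκ hκK hΛρ => ?_⟩
  obtain ⟨p, hp, hpπ, hpκ⟩ := hFcover π κ hπ hκ hκK hΛρ
  obtain ⟨m, hm⟩ : (p.1, rescale p) ∈ Set.range f :=
    hf ▸ Set.mem_insert_of_mem _ (Set.mem_image_of_mem _ hp)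
  refine ⟨m, fun i => ?_, fun i j => ?_⟩
  · simpa only [hm] using hpπ i
  · simpa only [hm] using ((hrescale p hp).2.1 i j).trans (hpκ i j)
end

section
/- Let ε > 0 and let α > 0 be a real number satisfying α = 1 − e^{−(1+ε)α}. Then (a) α ≤ 2ε, and (b) for every real x ≥ α one has x ≥ 1 − e^{−(1+ε)x}. -/
/-!
The map `g x = 1 - exp (-(1 + ε) x)` is strictly concave with `g 0 = 0`, so its secant slope
`g x / x` is strictly decreasing on `(0, ∞)`; since it equals `1` at the fixed point `α`, we get
`g x ≤ x ↔ α ≤ x` for `x > 0`. This gives (b) directly, and (a) reduces to `g (2ε) ≤ 2ε`, i.e.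
`1 - 2ε ≤ exp (-(2ε + 2ε²))`, which follows from `-log (1 - y) ≥ y + y² / 2`.
-/

open Real Set

section SecantSlope

variable {𝕜 : Type*} [Field 𝕜] [LinearOrder 𝕜] [IsStrictOrderedRing 𝕜]

theorem StrictConcaveOn.div_lt_div_of_map_zero {f : 𝕜 → 𝕜} (hf : StrictConcaveOn 𝕜 (Ici 0) f)
    (h0 : f 0 = 0) {x y : 𝕜} (hx : 0 < x) (hxy : x < y) : f y / y < f x / x := by
  simpa [h0] using hf.secant_strict_mono (a := 0) le_rfl hx.le (hx.trans hxy).le hx.ne'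
    (hx.trans hxy).ne' hxy

theorem StrictConcaveOn.map_le_self_iff {f : 𝕜 → 𝕜} (hf : StrictConcaveOn 𝕜 (Ici 0) f)
    (h0 : f 0 = 0) {a x : 𝕜} (ha : 0 < a) (hfa : f a = a) (hx : 0 < x) : f x ≤ x ↔ a ≤ x := by
  rcases lt_trichotomy x a with hxa | rfl | hax
  · have hslope := hf.div_lt_div_of_map_zero h0 hx hxa
    rw [hfa, div_self ha.ne', one_lt_div hx] at hslope
    exact iff_of_false hslope.not_ge hxa.not_ge
  · exact iff_of_true hfa.le le_rfl
  · have hslope := hf.div_lt_div_of_map_zero h0 ha hax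
    rw [hfa, div_self ha.ne', div_lt_one (ha.trans hax)] at hslope
    exact iff_of_true hslope.le hax.le

end SecantSlope

theorem strictConcaveOn_one_sub_exp_neg_mul {β : ℝ} (hβ : 0 < β) :
    StrictConcaveOn ℝ univ fun x => 1 - exp (-β * x) := by
  refine ⟨convex_univ, fun x _ y _ hxy a b ha hb hab => ?_⟩
  have hne : -β * x ≠ -β * y := by
    simpa [hβ.ne'] using hxy
  have hexp := strictConvexOn_exp.2 (mem_univ _) (mem_univ _) hne ha hb hab
  simp only [smul_eq_mul] at hexp ⊢
  rw [show -β * (a * x + b * y) = a * (-β * x) + b * (-β * y) by ring]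
  linear_combination hexp + hab

theorem add_sq_div_two_le_neg_log_one_sub {y : ℝ} (hy₀ : 0 ≤ y) (hy₁ : y < 1) :
    y + y ^ 2 / 2 ≤ -log (1 - y) := by
  have hsum := sum_le_hasSum (Finset.range 2) (fun n _ => by positivity)
    (hasSum_pow_div_log_of_abs_lt_one (abs_lt.2 ⟨by linarith, hy₁⟩))
  norm_num [Finset.sum_range_succ] at hsum
  linarith

theorem one_sub_exp_neg_add_sq_div_two_le {y : ℝ} (hy : 0 ≤ y) :
    1 - exp (-(y + y ^ 2 / 2)) ≤ y := by
  rcases lt_or_ge y 1 with hy₁ | hy₁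
  · have hlog : log (1 - y) ≤ -(y + y ^ 2 / 2) := by
      linarith [add_sq_div_two_le_neg_log_one_sub hy hy₁]
    have := exp_le_exp.2 hlog
    rw [exp_log (by linarith)] at this
    linarith
  · linarith [exp_pos (-(y + y ^ 2 / 2))]

/-- Lemma 5.4 (alphaelemma): properties of the fixed point α of x ↦ 1 − e^{−(1+ε)x}. -/
theorem alpha_epsilon_lemma (ε α : ℝ) (hε : 0 < ε) (hα : 0 < α)
    (hfix : α = 1 - Real.exp (-(1 + ε) * α)) :
    α ≤ 2 * ε ∧ ∀ x : ℝ, α ≤ x → 1 - Real.exp (-(1 + ε) * x) ≤ x := by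
  have hg := (strictConcaveOn_one_sub_exp_neg_mul (β := 1 + ε) (by linarith)).subset
    (subset_univ _) (convex_Ici 0)
  have hfix_iff (x : ℝ) (hx : 0 < x) : 1 - exp (-(1 + ε) * x) ≤ x ↔ α ≤ x :=
    hg.map_le_self_iff (by simp) hα hfix.symm hx
  refine ⟨(hfix_iff _ (by positivity)).1 ?_, fun x hx => (hfix_iff x (hα.trans_le hx)).2 hx⟩
  convert one_sub_exp_neg_add_sq_div_two_le (by positivity : 0 ≤ 2 * ε) using 3
  ring
end
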